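/- arXiv:1906.10590 — 12 statements merged into one kernel-verified Lean document; each statement's English description precedes it below -/
import Mathlib

section
/- Let U be an h-scattered K-subspace of the r-dimensional L-vector space V, where 1 < h ≤ r−1. Then for every integer i with 1 ≤ i < h, the subspace U is i-scattered; in particular, U is 1-scattered. -/
/-- `U` is an `h`-scattered `K`-subspace of the `L`-vector space `V`:
it spans `V` over `L` and meets every `h`-dimensional `L`-subspace in a
`K`-subspace of dimension at most `h`. -/
def IsHScattered (K L V : Type*) [Field K] [Field L] [Algebra K L]
    [AddCommGroup V] [Module L V] [Module K V] [IsScalarTower K L V]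
    (h : ℕ) (U : Submodule K V) : Prop :=
  Submodule.span L (U : Set V) = ⊤ ∧
  ∀ S : Submodule L V, Module.finrank L S = h →
    Module.finrank K ↥(U ⊓ S.restrictScalars K) ≤ h

theorem stmt0 (n r h : ℕ) (K L V : Type*) [Field K] [Fintype K] [Field L] [Algebra K L]
    [AddCommGroup V] [Module L V] [Module K V] [IsScalarTower K L V]
    [FiniteDimensional K L] [FiniteDimensional L V]
    (hn : Module.finrank K L = n) (hr : Module.finrank L V = r)
    (hh1 : 1 < h) (hhr : h ≤ r - 1)
    (U : Submodule K V) (hU : IsHScattered K L V h U) :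
    ∀ i : ℕ, 1 ≤ i → i < h → IsHScattered K L V i U := by
  haveI : FiniteDimensional K V := Module.Finite.trans L V
  obtain ⟨hspan, hscat⟩ := hU
  -- key extension lemma, by induction on k
  have aux : ∀ k : ℕ, ∀ S : Submodule L V,
      Module.finrank L S + k ≤ Module.finrank L V →
      ∃ T : Submodule L V, S ≤ T ∧ Module.finrank L T = Module.finrank L S + k ∧
        Module.finrank K ↥(U ⊓ S.restrictScalars K) + k ≤
          Module.finrank K ↥(U ⊓ T.restrictScalars K) := by
    intro k
    induction k with
    | zero => intro S _; exact ⟨S, le_rfl, by simp, by simp⟩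
    | succ k ih =>
      intro S hSk
      -- S is not all of V
      have hSne : S ≠ ⊤ := by
        intro hST
        have : Module.finrank L S = Module.finrank L V := by
          rw [hST, finrank_top]
        omega
      -- choose u ∈ U with u ∉ S
      obtain ⟨u, huU, huS⟩ : ∃ u ∈ U, u ∉ S := by
        by_contra hcon
        push_neg at hcon
        have : (U : Set V) ⊆ (S : Set V) := fun x hx => hcon x hx
        have : Submodule.span L (U : Set V) ≤ S := Submodule.span_le.mpr this
        rw [hspan] at this
        exact hSne (top_le_iff.mp this)
      have hu0 : u ≠ 0 := fun h0 => huS (h0 ▸ S.zero_mem)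
      set S' : Submodule L V := S ⊔ Submodule.span L {u} with hS'
      have hle : S ≤ S' := le_sup_left
      have huS' : u ∈ S' := Submodule.mem_sup_right (Submodule.mem_span_singleton_self u)
      -- finrank of S' is finrank S + 1
      have hinf : S ⊓ Submodule.span L {u} = ⊥ := by
        rw [eq_bot_iff]
        rintro x ⟨hxS, hxu⟩
        obtain ⟨c, rfl⟩ := Submodule.mem_span_singleton.mp hxu
        rcases eq_or_ne c 0 with rfl | hc
        · simpa using Submodule.zero_mem _
        · exact absurd (by simpa [hc] using S.smul_mem c⁻¹ hxS) huS
      have hdim : Module.finrank L S' = Module.finrank L S + 1 := by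
        have h2 := Submodule.finrank_sup_add_finrank_inf_eq S (Submodule.span L {u})
        rw [hinf, finrank_span_singleton hu0] at h2
        simp only [finrank_bot] at h2
        rw [hS']
        omega
      -- K-dimension strictly increases
      have hlt : (U ⊓ S.restrictScalars K) < (U ⊓ S'.restrictScalars K) := by
        refine lt_of_le_of_ne (inf_le_inf_left U ?_) ?_
        · exact fun x hx => hle hx
        · intro heq
          have : u ∈ U ⊓ S.restrictScalars K := heq ▸ ⟨huU, huS'⟩
          exact huS this.2
      have hKdim : Module.finrank K ↥(U ⊓ S.restrictScalars K) + 1 ≤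
          Module.finrank K ↥(U ⊓ S'.restrictScalars K) :=
        Submodule.finrank_lt_finrank_of_lt hlt
      obtain ⟨T, hS'T, hTdim, hTK⟩ := ih S' (by omega)
      exact ⟨T, le_trans hle hS'T, by omega, by omega⟩
  intro i hi1 hih
  refine ⟨hspan, fun S hS => ?_⟩
  have hle : i + (h - i) ≤ Module.finrank L V := by omega
  obtain ⟨T, _, hTdim, hTK⟩ := aux (h - i) S (by rw [hS]; exact hle)
  have hTh : Module.finrank L T = h := by rw [hTdim, hS]; omega
  have := hscat T hTh
  omega
end

section
/- Let K be a finite field with q elements, let L be a field extension of K of degree n, and let V be an r-dimensional L-vector space with 2 ≤ r ≤ n. Then for every integer i with r ≤ i ≤ n there exists an (r−1)-scattered K-subspace of V of K-dimension i. -/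
open Polynomial Module

section LinearizedPolynomial

variable {R : Type*} [Semiring R]

noncomputable def linearizedPoly (q : ℕ) {r : ℕ} (a : Fin r → R) : R[X] :=
  ∑ j, C (a j) * X ^ q ^ (j : ℕ)

variable {q r : ℕ} (a : Fin r → R)

theorem eval_linearizedPoly (x : R) :
    (linearizedPoly q a).eval x = ∑ j, a j * x ^ q ^ (j : ℕ) := by
  simp [linearizedPoly, eval_finsetSum]

theorem coeff_linearizedPoly_pow (hq : 1 < q) (j : Fin r) :
    (linearizedPoly q a).coeff (q ^ (j : ℕ)) = a j := by
  rw [linearizedPoly, finsetSum_coeff, Finset.sum_eq_single j]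
  · simp [coeff_C_mul, coeff_X_pow]
  · intro k _ hkj
    have : q ^ (j : ℕ) ≠ q ^ (k : ℕ) := fun h => hkj (Fin.ext (Nat.pow_right_injective hq h).symm)
    simp [coeff_C_mul, coeff_X_pow, this]
  · simp

theorem linearizedPoly_ne_zero (hq : 1 < q) (ha : a ≠ 0) : linearizedPoly q a ≠ 0 := by
  obtain ⟨j, hj⟩ := Function.ne_iff.mp ha
  exact fun h => hj (by rw [← coeff_linearizedPoly_pow a hq, h, coeff_zero, Pi.zero_apply])

theorem natDegree_linearizedPoly_le (hq : 0 < q) :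
    (linearizedPoly q a).natDegree ≤ q ^ (r - 1) :=
  natDegree_sum_le_of_forall_le _ _ fun j _ =>
    (natDegree_C_mul_X_pow_le _ _).trans (Nat.pow_le_pow_right hq (by omega))

end LinearizedPolynomial

theorem Submodule.finrank_le_of_forall_eval_eq_zero {K L : Type*} [Field K] [Fintype K] [Field L]
    [Algebra K L] {T : Submodule K L} {P : L[X]} (hP : P ≠ 0) {m : ℕ}
    (hdeg : P.natDegree ≤ Fintype.card K ^ m) (hT : ∀ x ∈ T, P.eval x = 0) :
    finrank K T ≤ m := by
  classical
  have hsub : (T : Set L) ⊆ P.roots.toFinset := fun x hx => by simpa [mem_roots hP] using hT x hx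
  have : Finite T := P.roots.toFinset.finite_toSet.subset hsub
  have hcard : Nat.card T ≤ Fintype.card K ^ m := calc
    Nat.card T = (T : Set L).ncard := Nat.card_coe_set_eq _
    _ ≤ P.roots.toFinset.card := by simpa using Set.ncard_le_ncard hsub
    _ ≤ Multiset.card P.roots := Multiset.toFinset_card_le _
    _ ≤ P.natDegree := P.card_roots'
    _ ≤ _ := hdeg
  rw [Module.natCard_eq_pow_finrank (K := K), Nat.card_eq_fintype_card] at hcard
  exact (Nat.pow_le_pow_iff_right Fintype.one_lt_card).mp hcard

theorem Submodule.exists_finrank_eq {R M : Type*} [DivisionRing R] [AddCommGroup M] [Module R M]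
    {m : ℕ} (hm : m ≤ finrank R M) : ∃ W : Submodule R M, finrank R W = m := by
  obtain ⟨f, hf⟩ := exists_linearIndependent_of_le_finrank hm
  exact ⟨span R (Set.range f), by rw [finrank_span_eq_card hf, Fintype.card_fin]⟩

section MooreMap

variable (K : Type*) {L V : Type*} [Field K] [Fintype K] [Field L] [Algebra K L]
  [AddCommGroup V] [Module L V] [Module K V] [IsScalarTower K L V] {r : ℕ} (b : Basis (Fin r) L V)

/-- Coordinates `(x, x ^ q, …, x ^ q ^ (r - 1))` in the basis `b`: a row of a Moore matrix. -/
noncomputable def mooreMap : L →ₗ[K] V :=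
  (b.equivFun.symm.restrictScalars K).toLinearMap ∘ₗ
    LinearMap.pi fun j : Fin r => (FiniteField.frobeniusAlgHom K L ^ (j : ℕ)).toLinearMap

@[simp]
theorem repr_mooreMap (x : L) (j : Fin r) :
    b.repr (mooreMap K b x) j = x ^ Fintype.card K ^ (j : ℕ) := by
  change b.equivFun (b.equivFun.symm _) j = _
  rw [LinearEquiv.apply_symm_apply]
  simp [AlgHom.coe_pow, FiniteField.coe_frobeniusAlgHom, pow_iterate]

theorem mooreMap_injective [NeZero r] : Function.Injective (mooreMap K b) := fun x y h => by
  simpa using congr_arg (b.repr · 0) h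

theorem apply_mooreMap (f : V →ₗ[L] L) (x : L) :
    f (mooreMap K b x) = (linearizedPoly (Fintype.card K) (f ∘ b)).eval x := by
  conv_lhs => rw [← b.sum_repr (mooreMap K b x)]
  simp [eval_linearizedPoly, mul_comm]

theorem finrank_range_mooreMap_inf_le [FiniteDimensional K L] {S : Submodule L V} (hS : S < ⊤) :
    finrank K ↥(LinearMap.range (mooreMap K b) ⊓ S.restrictScalars K) ≤ r - 1 := by
  obtain ⟨f, hf, hSf⟩ := S.exists_le_ker_of_lt_top hS
  have hP : linearizedPoly (Fintype.card K) (f ∘ b) ≠ 0 :=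
    linearizedPoly_ne_zero _ Fintype.one_lt_card fun h => hf (b.ext fun j => congr_fun h j)
  rw [← Submodule.map_comap_eq]
  refine (Submodule.finrank_map_le _ _).trans <|
    Submodule.finrank_le_of_forall_eval_eq_zero hP (natDegree_linearizedPoly_le _ Fintype.card_pos)
      fun x hx => ?_
  rw [← apply_mooreMap]
  exact hSf hx

theorem isHScattered_of_le_range_mooreMap [FiniteDimensional K L] [NeZero r] {U : Submodule K V}
    (hU : U ≤ LinearMap.range (mooreMap K b)) (hrU : r ≤ finrank K U) :
    IsHScattered K L V (r - 1) U := by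
  have : Module.Finite L V := .of_basis b
  have : Module.Finite K V := .trans L V
  have key {S : Submodule L V} (hS : S < ⊤) : finrank K ↥(U ⊓ S.restrictScalars K) ≤ r - 1 :=
    (Submodule.finrank_mono (inf_le_inf_right _ hU)).trans (finrank_range_mooreMap_inf_le K b hS)
  have hr0 := NeZero.pos r
  refine ⟨?_, fun S hS => key (Submodule.lt_top_of_finrank_lt_finrank ?_)⟩
  · by_contra h
    have := key (lt_top_iff_ne_top.mpr h)
    rw [inf_eq_left.mpr fun u hu => Submodule.subset_span hu] at this
    omega
  · rw [hS, finrank_eq_card_basis b, Fintype.card_fin]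
    omega

end MooreMap

theorem stmt1_general (n r : ℕ) (K L V : Type*) [Field K] [Fintype K] [Field L] [Algebra K L]
    [AddCommGroup V] [Module L V] [Module K V] [IsScalarTower K L V]
    [FiniteDimensional K L] [FiniteDimensional L V]
    (hn : Module.finrank K L = n) (hr : Module.finrank L V = r)
    (hr2 : 2 ≤ r) :
    ∀ i : ℕ, r ≤ i → i ≤ n →
      ∃ U : Submodule K V, IsHScattered K L V (r - 1) U ∧ Module.finrank K ↥U = i := by
  intro i hri hin
  obtain ⟨W, hW⟩ := Submodule.exists_finrank_eq (R := K) (M := L) (hin.trans_eq hn.symm)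
  have : NeZero r := ⟨by omega⟩
  let b := Module.finBasisOfFinrankEq L V hr
  have hU : finrank K ↥(W.map (mooreMap K b)) = i :=
    (Submodule.equivMapOfInjective _ (mooreMap_injective K b) W).finrank_eq.symm.trans hW
  exact ⟨_, isHScattered_of_le_range_mooreMap K b LinearMap.map_le_range (hU ▸ hri), hU⟩

theorem stmt1 (n r : ℕ) (K L V : Type*) [Field K] [Fintype K] [Field L] [Algebra K L]
    [AddCommGroup V] [Module L V] [Module K V] [IsScalarTower K L V]
    [FiniteDimensional K L] [FiniteDimensional L V]
    (hn : Module.finrank K L = n) (hr : Module.finrank L V = r)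
    (hr2 : 2 ≤ r) (hrn : r ≤ n) :
    ∀ i : ℕ, r ≤ i → i ≤ n →
      ∃ U : Submodule K V, IsHScattered K L V (r - 1) U ∧ Module.finrank K ↥U = i :=
  stmt1_general n r K L V hn hr hr2
end

section
/- Let V be an r-dimensional L-vector space and let U be an h-scattered K-subspace of V, where 0 < h ≤ r−1. Then either dim_K U = r and U is (r−1)-scattered, or (h+1)·dim_K U ≤ r·n. -/
open Module Submodule

section

variable {K L V : Type*} [Field K] [Field L] [Algebra K L]
  [AddCommGroup V] [Module L V] [Module K V] [IsScalarTower K L V]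

theorem Module.Basis.span_range_coe {ι : Type*} {W : Submodule K V} (b : Basis ι K W) :
    span K (Set.range fun i => (b i : V)) = W := by
  rw [Set.range_comp' Subtype.val b, ← W.coe_subtype, ← map_span, b.span_eq, Submodule.map_top,
    range_subtype]

theorem span_eq_span_range_basis {ι : Type*} {W : Submodule K V} (b : Basis ι K W) :
    span L (W : Set V) = span L (Set.range fun i => (b i : V)) :=
  calc span L (W : Set V) = span L (span K (Set.range fun i => (b i : V)) : Set V) := by
        rw [b.span_range_coe]
    _ = _ := span_span_of_tower K L _

theorem finrank_span_le_finrank (W : Submodule K V) [FiniteDimensional K W] :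
    finrank L (span L (W : Set V)) ≤ finrank K W := by
  let b := finBasis K W
  calc finrank L (span L (W : Set V)) ≤ Fintype.card (Fin (finrank K W)) := by
        rw [span_eq_span_range_basis b]; exact finrank_range_le_card _
    _ = finrank K W := Fintype.card_fin _

theorem eq_zero_of_sum_smul_eq_zero_of_finrank_span_eq {W : Submodule K V} [FiniteDimensional K W]
    (hW : finrank L (span L (W : Set V)) = finrank K W) {ι : Type*} [Fintype ι] {μ : ι → L}
    (hμ : LinearIndependent K μ) {v : ι → V} (hvW : ∀ i, v i ∈ W) (hv : ∑ i, μ i • v i = 0) :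
    v = 0 := by
  let b := finBasis K W
  have hb : LinearIndependent L fun j => (b j : V) :=
    linearIndependent_iff_card_eq_finrank_span.2 <| by
      rw [Fintype.card_fin, Set.finrank, ← span_eq_span_range_basis b, hW]
  let c : ι × Fin (finrank K W) → K := fun p => b.repr ⟨v p.1, hvW p.1⟩ p.2
  have hc : ∑ p, c p • (μ p.1 • (b p.2 : V)) = 0 := by
    rw [← hv, Fintype.sum_prod_type]
    refine Finset.sum_congr rfl fun i _ => ?_
    have hvi : v i = ∑ j, c (i, j) • (b j : V) :=
      calc v i = ((∑ j, b.repr ⟨v i, hvW i⟩ j • b j : W) : V) := by rw [b.sum_repr]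
        _ = _ := by simp only [coe_sum, coe_smul]; rfl
    conv_rhs => rw [hvi]
    simp only [Finset.smul_sum, smul_comm (c _)]
  have hc0 := Fintype.linearIndependent_iff.1 (linearIndependent_smul hμ hb) c hc
  funext i
  have : (⟨v i, hvW i⟩ : W) = 0 := b.ext_elem fun j => by simpa using hc0 (i, j)
  simpa using congrArg Subtype.val this

theorem not_le_restrictScalars_of_span_eq_top {U : Submodule K V}
    (hU : span L (U : Set V) = ⊤) {S : Submodule L V} (hS : S ≠ ⊤) :
    ¬U ≤ S.restrictScalars K := fun hle =>
  hS <| top_unique <| hU ▸ span_le.2 hle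

theorem finrank_inf_restrictScalars_lt [FiniteDimensional K V] {U : Submodule K V}
    (hU : span L (U : Set V) = ⊤) {S : Submodule L V} (hS : S ≠ ⊤) :
    finrank K ↥(U ⊓ S.restrictScalars K) < finrank K U :=
  finrank_lt_finrank_of_lt <| inf_le_left.lt_of_ne fun heq =>
    not_le_restrictScalars_of_span_eq_top hU hS (heq ▸ inf_le_right)

theorem exists_finrank_inf_restrictScalars_lt [FiniteDimensional K V] [FiniteDimensional L V]
    {U : Submodule K V} (hU : span L (U : Set V) = ⊤) {S : Submodule L V} (hS : S ≠ ⊤) :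
    ∃ S' : Submodule L V, finrank L S' = finrank L S + 1 ∧
      finrank K ↥(U ⊓ S.restrictScalars K) < finrank K ↥(U ⊓ S'.restrictScalars K) := by
  obtain ⟨u, huU, huS⟩ := SetLike.not_le_iff_exists.1 (not_le_restrictScalars_of_span_eq_top hU hS)
  refine ⟨S ⊔ L ∙ u, finrank_sup_span_singleton huS, finrank_lt_finrank_of_lt ?_⟩
  refine SetLike.lt_iff_le_and_exists.2
    ⟨inf_le_inf_left _ ?_, u, ?_, fun hu => huS (mem_inf.1 hu).2⟩
  · exact (restrictScalarsEmbedding K L V).monotone le_sup_left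
  · exact mem_inf.2 ⟨huU, mem_sup_right (mem_span_singleton_self u)⟩

theorem IsHScattered.finrank_inf_restrictScalars_le [FiniteDimensional K V] [FiniteDimensional L V]
    {h : ℕ} {U : Submodule K V} (hU : IsHScattered K L V h U) (hh : h ≤ finrank L V)
    {S : Submodule L V} (hS : finrank L S ≤ h) :
    finrank K ↥(U ⊓ S.restrictScalars K) ≤ finrank L S := by
  obtain ⟨k, hk⟩ := Nat.exists_eq_add_of_le hS
  induction k generalizing S with
  | zero => simpa [hk] using hU.2 S hk.symm
  | succ k ih =>
    have hS_top : S ≠ ⊤ := fun hS_top => by rw [hS_top, finrank_top] at hk; omega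
    obtain ⟨S', hS', hlt⟩ := exists_finrank_inf_restrictScalars_lt hU.1 hS_top
    have hS'U := ih (S := S') (by omega) (by omega)
    omega

theorem isHScattered_finrank_sub_one [FiniteDimensional K V] {U : Submodule K V}
    (hU : span L (U : Set V) = ⊤) (hUV : finrank K U = finrank L V) :
    IsHScattered K L V (finrank L V - 1) U := by
  refine ⟨hU, fun S hS => ?_⟩
  rcases eq_or_ne S ⊤ with rfl | hS_top
  · rw [finrank_top] at hS
    rw [restrictScalars_top, inf_top_eq, ← hS, hUV]
  · exact Nat.le_sub_one_of_lt (hUV ▸ finrank_inf_restrictScalars_lt hU hS_top)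

theorem exists_ne_zero_sum_smul_eq_zero [FiniteDimensional K V] {ι : Type*} [Fintype ι]
    (μ : ι → L) {U : Submodule K V} (hU : finrank K V < Fintype.card ι * finrank K U) :
    ∃ v : ι → V, (∀ i, v i ∈ U) ∧ v ≠ 0 ∧ ∑ i, μ i • v i = 0 := by
  let φ : (ι → U) →ₗ[K] V := ∑ i, μ i • (U.subtype ∘ₗ LinearMap.proj i)
  have hker : LinearMap.ker φ ≠ ⊥ := LinearMap.ker_ne_bot_of_finrank_lt <| by
    rwa [finrank_pi_fintype, Finset.sum_const, Finset.card_univ, smul_eq_mul]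
  obtain ⟨u, hu, hu0⟩ := (Submodule.ne_bot_iff _).1 hker
  refine ⟨fun i => u i, fun i => (u i).2,
    fun h => hu0 (funext fun i => Subtype.ext (congrFun h i)), ?_⟩
  simpa [φ] using hu

theorem IsHScattered.mul_finrank_le [FiniteDimensional K L] [FiniteDimensional L V] {h : ℕ}
    {U : Submodule K V} (hU : IsHScattered K L V h U) (hh : h ≤ finrank L V)
    (hUV : finrank L V < finrank K U) :
    (h + 1) * finrank K U ≤ finrank L V * finrank K L := by
  have : FiniteDimensional K V := Module.Finite.trans L V
  by_contra! hcon
  -- `m ≤ n` so that `m` elements of `L` can be independent, `m ≤ h + 1` so that `S` below is small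
  set m := min (h + 1) (finrank K L)
  let μ : Fin m → L := fun i => finBasis K L (Fin.castLE (min_le_right _ _) i)
  have hμ : LinearIndependent K μ :=
    (finBasis K L).linearIndependent.comp _ (Fin.castLE_injective _)
  have hdim : finrank K V < Fintype.card (Fin m) * finrank K U := by
    rw [Fintype.card_fin, min_mul_of_nonneg _ _ (Nat.zero_le _), ← finrank_mul_finrank K L V]
    exact lt_min (by linarith) (Nat.mul_lt_mul_of_pos_left hUV finrank_pos)
  obtain ⟨v, hvU, hv0, hv⟩ := exists_ne_zero_sum_smul_eq_zero μ hdim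
  set W := span K (Set.range v)
  set S := span L (W : Set V)
  have hSW : finrank L S < finrank K W :=
    (finrank_span_le_finrank W).lt_of_ne fun hW =>
      hv0 (eq_zero_of_sum_smul_eq_zero_of_finrank_span_eq hW hμ (fun i => subset_span ⟨i, rfl⟩) hv)
  have hWm : finrank K W ≤ m := (finrank_range_le_card v).trans_eq (Fintype.card_fin m)
  have hWUS : W ≤ U ⊓ S.restrictScalars K :=
    le_inf (span_le.2 (Set.range_subset_iff.2 hvU)) subset_span
  have hUS : finrank K ↥(U ⊓ S.restrictScalars K) ≤ finrank L S :=
    hU.finrank_inf_restrictScalars_le hh (by omega)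
  have := finrank_mono hWUS
  omega

end

theorem stmt2_general (n r h : ℕ) (K L V : Type*) [Field K] [Field L] [Algebra K L]
    [AddCommGroup V] [Module L V] [Module K V] [IsScalarTower K L V]
    [FiniteDimensional K L] [FiniteDimensional L V]
    (hn : Module.finrank K L = n) (hr : Module.finrank L V = r)
    (hhr : h ≤ r - 1)
    (U : Submodule K V) (hU : IsHScattered K L V h U) :
    (Module.finrank K ↥U = r ∧ IsHScattered K L V (r - 1) U) ∨
      (h + 1) * Module.finrank K ↥U ≤ r * n := by
  have : FiniteDimensional K V := Module.Finite.trans L V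
  subst hn hr
  have hVU : finrank L V ≤ finrank K U := by
    have := finrank_span_le_finrank (L := L) U
    rwa [hU.1, finrank_top] at this
  rcases hVU.eq_or_lt with hUV | hUV
  · exact .inl ⟨hUV.symm, isHScattered_finrank_sub_one hU.1 hUV.symm⟩
  · exact .inr (hU.mul_finrank_le (by omega) hUV)

theorem stmt2 (n r h : ℕ) (K L V : Type*) [Field K] [Fintype K] [Field L] [Algebra K L]
    [AddCommGroup V] [Module L V] [Module K V] [IsScalarTower K L V]
    [FiniteDimensional K L] [FiniteDimensional L V]
    (hn : Module.finrank K L = n) (hr : Module.finrank L V = r)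
    (h0 : 0 < h) (hhr : h ≤ r - 1)
    (U : Submodule K V) (hU : IsHScattered K L V h U) :
    (Module.finrank K ↥U = r ∧ IsHScattered K L V (r - 1) U) ∨
      (h + 1) * Module.finrank K ↥U ≤ r * n :=
  stmt2_general n r h K L V hn hr hhr U hU
end

section
/- Let K be a finite field with q elements, let L be a field extension of K of degree n, and let V be an r-dimensional L-vector space. If 0 < h, h+1 divides r, and n ≥ h+1, then V contains an h-scattered K-subspace of K-dimension r·n/(h+1). -/
open Module Polynomial

section Frob
variable (K L : Type*) [Field K] [Fintype K] [Field L] [Algebra K L]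

/-- `x ↦ x ^ (card K)^i` as a `K`-linear map on `L`. -/
noncomputable def frobLin (i : ℕ) : L →ₗ[K] L where
  toFun x := x ^ (Fintype.card K) ^ i
  map_add' x y := by
    obtain ⟨p, hchar⟩ := CharP.exists K
    haveI : CharP K p := hchar
    obtain ⟨m, hp, hq⟩ := FiniteField.card K p
    haveI : CharP L p := charP_of_injective_algebraMap (algebraMap K L).injective p
    haveI : Fact p.Prime := ⟨hp⟩
    rw [hq, ← pow_mul]
    exact add_pow_char_pow x y p (m * i)
  map_smul' a x := by
    simp only [Algebra.smul_def, mul_pow, RingHom.id_apply]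
    rw [← map_pow, FiniteField.pow_card_pow]

@[simp] lemma frobLin_apply (i : ℕ) (x : L) :
    frobLin K L i x = x ^ (Fintype.card K) ^ i := rfl

variable [FiniteDimensional K L]

/-- Root-count bound: a `K`-subspace of `L` all of whose elements are roots of a nonzero
`q`-polynomial of `q`-degree at most `h` has dimension at most `h`. -/
lemma rootBound (h : ℕ) (a : Fin (h + 1) → L) (ha : a ≠ 0) (Z : Submodule K L)
    (hZ : ∀ x ∈ Z, ∑ i : Fin (h + 1), a i * x ^ (Fintype.card K) ^ (i : ℕ) = 0) :
    finrank K Z ≤ h := by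
  classical
  set q := Fintype.card K with hqdef
  have hq1 : 1 < q := Fintype.one_lt_card
  obtain ⟨i₀, hi₀⟩ : ∃ i, a i ≠ 0 := by
    by_contra hc
    push_neg at hc
    exact ha (funext hc)
  set P : L[X] := ∑ i : Fin (h + 1), C (a i) * X ^ (q ^ (i : ℕ)) with hP
  have hinj : Function.Injective fun i : Fin (h + 1) => q ^ (i : ℕ) := fun i j hij => by
    have := Nat.pow_right_injective hq1 hij
    exact Fin.ext this
  have hPne : P ≠ 0 := by
    intro h0
    have hcoeff : P.coeff (q ^ (i₀ : ℕ)) = a i₀ := by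
      rw [hP, Polynomial.finset_sum_coeff]
      rw [Finset.sum_eq_single i₀]
      · simp
      · intro j _ hji
        simp only [coeff_C_mul, coeff_X_pow]
        rw [if_neg, mul_zero]
        exact fun hc => hji (hinj hc.symm)
      · simp
    rw [h0] at hcoeff
    simp at hcoeff
    exact hi₀ hcoeff.symm
  have hdeg : P.natDegree ≤ q ^ h := by
    apply Polynomial.natDegree_sum_le_of_forall_le
    intro i _
    refine le_trans (natDegree_C_mul_le _ _) ?_
    rw [natDegree_X_pow]
    exact Nat.pow_le_pow_right (by omega) (by omega)
  -- every element of Z is a root of P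
  haveI : Finite L := Module.finite_of_finite K
  haveI : Fintype L := Fintype.ofFinite L
  have hroot : ∀ x ∈ Z, P.IsRoot x := by
    intro x hx
    have := hZ x hx
    simp only [IsRoot, hP, eval_finset_sum, eval_mul, eval_C, eval_pow, eval_X]
    exact this
  have hcard : Fintype.card Z ≤ q ^ h := by
    have hinj2 : Function.Injective
        (fun z : Z => (⟨(z : L), by
          rw [Multiset.mem_toFinset, mem_roots hPne]; exact hroot z z.2⟩ :
          {x // x ∈ P.roots.toFinset})) := by
      intro z w hzw
      exact Subtype.ext (congrArg Subtype.val hzw :)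
    calc Fintype.card Z ≤ Fintype.card {x // x ∈ P.roots.toFinset} :=
          Fintype.card_le_of_injective _ hinj2
      _ = P.roots.toFinset.card := Fintype.card_coe _
      _ ≤ Multiset.card P.roots := Multiset.toFinset_card_le _
      _ ≤ P.natDegree := Polynomial.card_roots' P
      _ ≤ q ^ h := hdeg
  have hcardZ : Fintype.card Z = q ^ finrank K Z := card_eq_pow_finrank
  rw [hcardZ] at hcard
  exact (Nat.pow_le_pow_iff_right hq1).mp hcard
end Frob

section Base
variable (K L : Type*) [Field K] [Fintype K] [Field L] [Algebra K L] [FiniteDimensional K L]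

noncomputable def psiMap (h : ℕ) : L →ₗ[K] (Fin (h + 1) → L) :=
  LinearMap.pi fun i => frobLin K L (i : ℕ)

lemma psiMap_apply (h : ℕ) (x : L) (i : Fin (h + 1)) :
    psiMap K L h x i = x ^ (Fintype.card K) ^ (i : ℕ) := rfl

lemma psiMap_zeroth (h : ℕ) (x : L) : psiMap K L h x 0 = x := by
  rw [psiMap_apply]
  simp

lemma psiMap_inj (h : ℕ) : Function.Injective (psiMap K L h) := by
  intro x y hxy
  have := congrFun hxy (0 : Fin (h + 1))
  rwa [psiMap_zeroth, psiMap_zeroth] at this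

/-- Key: the kernel of `φ ∘ Ψ` has small dimension for nonzero functionals `φ`. -/
lemma ker_phi_psi_le (h : ℕ) (φ : Module.Dual L (Fin (h + 1) → L)) (hφ : φ ≠ 0) :
    finrank K (LinearMap.ker ((φ.restrictScalars K).comp (psiMap K L h))) ≤ h := by
  set a : Fin (h + 1) → L := fun i => φ (fun j => if i = j then 1 else 0) with hadef
  have ha : a ≠ 0 := by
    intro h0
    apply hφ
    apply LinearMap.ext
    intro x
    rw [LinearMap.pi_apply_eq_sum_univ φ x]
    have h0' : ∀ i, φ (fun j => if i = j then 1 else 0) = 0 := fun i => congrFun h0 i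
    simp [h0']
  apply rootBound K L h a ha
  intro x hx
  have hx' : φ (psiMap K L h x) = 0 := hx
  rw [LinearMap.pi_apply_eq_sum_univ φ (psiMap K L h x)] at hx'
  rw [← hx']
  refine Finset.sum_congr rfl fun i _ => ?_
  rw [psiMap_apply, smul_eq_mul, mul_comm, hadef]

lemma base_case (h n : ℕ) (hn : finrank K L = n) (hnh : h + 1 ≤ n) :
    IsHScattered K L (Fin (h + 1) → L) h (LinearMap.range (psiMap K L h)) ∧
      finrank K (LinearMap.range (psiMap K L h)) = n := by
  set U₀ := LinearMap.range (psiMap K L h) with hU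
  constructor
  · constructor
    · -- spanning
      by_contra hne
      have hlt : Submodule.span L (U₀ : Set (Fin (h + 1) → L)) < ⊤ := lt_top_iff_ne_top.mpr hne
      obtain ⟨φ, hφ0, hφ⟩ := Submodule.exists_dual_map_eq_bot_of_lt_top hlt inferInstance
      have hker : ∀ x : L, ((φ.restrictScalars K).comp (psiMap K L h)) x = 0 := by
        intro x
        have hmem : psiMap K L h x ∈ Submodule.span L (U₀ : Set (Fin (h + 1) → L)) :=
          Submodule.subset_span ⟨x, rfl⟩
        have : φ (psiMap K L h x) ∈ Submodule.map φ (Submodule.span L (U₀ : Set _)) :=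
          Submodule.mem_map_of_mem hmem
        rw [hφ] at this
        exact this
      have htop : LinearMap.ker ((φ.restrictScalars K).comp (psiMap K L h)) = ⊤ := by
        ext x; simpa using hker x
      have := ker_phi_psi_le K L h φ hφ0
      rw [htop, finrank_top, hn] at this
      omega
    · -- intersection bound
      intro S hS
      have hSlt : S < ⊤ := by
        rw [lt_top_iff_ne_top]
        intro hc
        rw [hc, finrank_top, Module.finrank_fin_fun] at hS
        omega
      obtain ⟨φ, hφ0, hφ⟩ := Submodule.exists_dual_map_eq_bot_of_lt_top hSlt inferInstance
      set Z := LinearMap.ker ((φ.restrictScalars K).comp (psiMap K L h)) with hZ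
      have hZle := ker_phi_psi_le K L h φ hφ0
      -- build injection from U₀ ⊓ S into Z
      set W := U₀ ⊓ S.restrictScalars K with hW
      have key : ∀ w : W, (w : Fin (h + 1) → L) 0 ∈ Z := by
        rintro ⟨w, hw1, hw2⟩
        obtain ⟨x, hx⟩ := hw1
        have hx0 : w 0 = x := by rw [← hx, psiMap_zeroth]
        have hφw : φ w = 0 := by
          have : φ w ∈ Submodule.map φ S := Submodule.mem_map_of_mem hw2
          rw [hφ] at this; exact this
        simp only [hZ, LinearMap.mem_ker, LinearMap.coe_comp, Function.comp_apply,
          LinearMap.coe_restrictScalars]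
        rw [hx0, hx]
        exact hφw
      let e : W →ₗ[K] Z :=
        { toFun := fun w => ⟨(w : Fin (h + 1) → L) 0, key w⟩
          map_add' := fun u v => rfl
          map_smul' := fun c u => rfl }
      have he : Function.Injective e := by
        rintro ⟨u, hu⟩ ⟨v, hv⟩ huv
        have h0 : u 0 = v 0 := congrArg Subtype.val huv
        obtain ⟨x, hx⟩ := hu.1
        obtain ⟨y, hy⟩ := hv.1
        have hxu : u 0 = x := by rw [← hx, psiMap_zeroth]
        have hyv : v 0 = y := by rw [← hy, psiMap_zeroth]
        apply Subtype.ext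
        show u = v
        rw [← hx, ← hy]
        congr 1
        rw [← hxu, ← hyv, h0]
      calc finrank K W ≤ finrank K Z := LinearMap.finrank_le_finrank_of_injective he
        _ ≤ h := hZle
  · rw [hU, LinearMap.finrank_range_of_inj (psiMap_inj K L h), hn]

end Base

section Generic
variable {K L V : Type*} [Field K] [Field L] [Algebra K L]
  [AddCommGroup V] [Module L V] [Module K V] [IsScalarTower K L V]
  [FiniteDimensional K L] [FiniteDimensional L V]

lemma scattered_inter_le (h : ℕ) (U : Submodule K V) (hU : IsHScattered K L V h U)
    (hh : h < finrank L V) (T : Submodule L V) (hT : finrank L T ≤ h) :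
    finrank K ↥(U ⊓ T.restrictScalars K) ≤ finrank L T := by
  haveI : FiniteDimensional K V := Module.Finite.trans L V
  suffices H : ∀ j (T : Submodule L V), finrank L T + j = h →
      finrank K ↥(U ⊓ T.restrictScalars K) ≤ finrank L T by
    exact H (h - finrank L T) T (by omega)
  intro j
  induction j with
  | zero =>
    intro T hT0
    have := hU.2 T (by omega)
    omega
  | succ j ih =>
    intro T hT0
    -- find u ∈ U with u ∉ T
    have hTne : (T : Set V) ≠ ⊤ := by
      intro hc
      have : T = ⊤ := by
        apply Submodule.eq_top_iff'.mpr
        intro x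
        rw [← SetLike.mem_coe, hc]
        trivial
      rw [this, finrank_top] at hT0
      omega
    obtain ⟨u, huU, huT⟩ : ∃ u, u ∈ U ∧ u ∉ T := by
      by_contra hc
      push_neg at hc
      have hsub : (U : Set V) ⊆ (T : Set V) := fun x hx => hc x hx
      have : Submodule.span L (U : Set V) ≤ T := Submodule.span_le.mpr hsub
      rw [hU.1, top_le_iff] at this
      exact hTne (by simp [this])
    have hune : u ≠ 0 := fun hc => huT (hc ▸ T.zero_mem)
    set T' := T ⊔ Submodule.span L {u} with hT'
    have hinf : T ⊓ Submodule.span L {u} = ⊥ := by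
      apply eq_bot_iff.mpr
      rintro v ⟨hv1, hv2⟩
      obtain ⟨c, rfl⟩ := Submodule.mem_span_singleton.mp hv2
      rcases eq_or_ne c 0 with hc | hc
      · simp [hc]
      · exfalso
        apply huT
        have : c⁻¹ • (c • u) ∈ T := T.smul_mem _ hv1
        rwa [inv_smul_smul₀ hc] at this
    have hrT' : finrank L ↥T' = finrank L ↥T + 1 := by
      have := Submodule.finrank_sup_add_finrank_inf_eq T (Submodule.span L {u})
      rw [hinf, finrank_bot, finrank_span_singleton hune, ← hT'] at this
      omega
    have hle : U ⊓ T.restrictScalars K < U ⊓ T'.restrictScalars K := by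
      apply lt_of_le_of_ne
      · exact inf_le_inf_left U fun x hx => (le_sup_left : T ≤ T') hx
      · intro hc
        have hu' : u ∈ U ⊓ T'.restrictScalars K :=
          ⟨huU, (le_sup_right : Submodule.span L {u} ≤ T') (Submodule.mem_span_singleton_self u)⟩
        rw [← hc] at hu'
        exact huT hu'.2
    have h1 : finrank K ↥(U ⊓ T.restrictScalars K) < finrank K ↥(U ⊓ T'.restrictScalars K) :=
      Submodule.finrank_lt_finrank_of_lt hle
    have h2 := ih T' (by omega)
    omega

end Generic

section Prod
variable {K L V₁ V₂ : Type*} [Field K] [Field L] [Algebra K L]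
  [AddCommGroup V₁] [Module L V₁] [Module K V₁] [IsScalarTower K L V₁]
  [AddCommGroup V₂] [Module L V₂] [Module K V₂] [IsScalarTower K L V₂]
  [FiniteDimensional K L] [FiniteDimensional L V₁] [FiniteDimensional L V₂]

lemma prod_scattered (h : ℕ) (U₁ : Submodule K V₁) (U₂ : Submodule K V₂)
    (h₁ : IsHScattered K L V₁ h U₁) (h₂ : IsHScattered K L V₂ h U₂)
    (hd₁ : h < finrank L V₁) (hd₂ : h < finrank L V₂) :
    IsHScattered K L (V₁ × V₂) h (U₁.prod U₂) := by
  haveI : FiniteDimensional K V₁ := Module.Finite.trans L V₁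
  haveI : FiniteDimensional K V₂ := Module.Finite.trans L V₂
  constructor
  · -- spanning
    rw [eq_top_iff]
    rintro ⟨x, y⟩ -
    have hfst : ∀ x : V₁, x ∈ Submodule.span L (U₁ : Set V₁) →
        ((x, (0 : V₂)) : V₁ × V₂) ∈ Submodule.span L ((U₁.prod U₂ : Submodule K (V₁ × V₂)) :
          Set (V₁ × V₂)) := by
      intro x hx
      induction hx using Submodule.span_induction with
      | mem z hz => exact Submodule.subset_span ⟨hz, U₂.zero_mem⟩
      | zero => exact Submodule.zero_mem _
      | add a b _ _ ha hb => simpa using Submodule.add_mem _ ha hb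
      | smul c a _ ha => simpa using Submodule.smul_mem _ c ha
    have hsnd : ∀ y : V₂, y ∈ Submodule.span L (U₂ : Set V₂) →
        (((0 : V₁), y) : V₁ × V₂) ∈ Submodule.span L ((U₁.prod U₂ : Submodule K (V₁ × V₂)) :
          Set (V₁ × V₂)) := by
      intro y hy
      induction hy using Submodule.span_induction with
      | mem z hz => exact Submodule.subset_span ⟨U₁.zero_mem, hz⟩
      | zero => exact Submodule.zero_mem _
      | add a b _ _ ha hb => simpa using Submodule.add_mem _ ha hb
      | smul c a _ ha => simpa using Submodule.smul_mem _ c ha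
    have hx : (x, (0 : V₂)) ∈ Submodule.span L ((U₁.prod U₂ : Submodule K (V₁ × V₂)) : Set _) :=
      hfst x (by rw [h₁.1]; trivial)
    have hy : ((0 : V₁), y) ∈ Submodule.span L ((U₁.prod U₂ : Submodule K (V₁ × V₂)) : Set _) :=
      hsnd y (by rw [h₂.1]; trivial)
    simpa using Submodule.add_mem _ hx hy
  · -- intersection bound
    intro S hS
    set W := U₁.prod U₂ ⊓ S.restrictScalars K with hW
    set π₂ : V₁ × V₂ →ₗ[L] V₂ := LinearMap.snd L V₁ V₂ with hπ₂
    set g : ↥W →ₗ[K] V₂ := (π₂.restrictScalars K).comp W.subtype with hg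
    -- L-side rank-nullity for π₂ restricted to S
    have hLrank : finrank L ↥(S ⊓ LinearMap.ker π₂) + finrank L ↥(S.map π₂) = h := by
      have hrn := LinearMap.finrank_range_add_finrank_ker (π₂.comp S.subtype)
      have hrange : LinearMap.range (π₂.comp S.subtype) = S.map π₂ := by
        rw [LinearMap.range_comp, Submodule.range_subtype]
      have hker : LinearMap.ker (π₂.comp S.subtype) = Submodule.comap S.subtype
          (LinearMap.ker π₂) := LinearMap.ker_comp _ _
      have hkerrank : finrank L ↥(LinearMap.ker (π₂.comp S.subtype)) =
          finrank L ↥(S ⊓ LinearMap.ker π₂) := by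
        rw [hker]
        have := (Submodule.comap S.subtype (LinearMap.ker π₂)).equivMapOfInjective
          S.subtype (Submodule.injective_subtype S)
        rw [this.finrank_eq, Submodule.map_comap_subtype]
      rw [hrange, hkerrank, hS] at hrn
      omega
    -- K-side rank-nullity for g
    have hKrank : finrank K ↥W = finrank K ↥(LinearMap.range g) + finrank K ↥(LinearMap.ker g) :=
      (LinearMap.finrank_range_add_finrank_ker g).symm
    -- range bound
    have hrange_le : finrank K ↥(LinearMap.range g) ≤ finrank L ↥(S.map π₂) := by
      have hsub : LinearMap.range g ≤ U₂ ⊓ (S.map π₂).restrictScalars K := by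
        rintro v ⟨⟨⟨v₁, v₂⟩, hw⟩, rfl⟩
        exact ⟨hw.1.2, ⟨(v₁, v₂), hw.2, rfl⟩⟩
      calc finrank K ↥(LinearMap.range g) ≤ finrank K ↥(U₂ ⊓ (S.map π₂).restrictScalars K) :=
            Submodule.finrank_mono hsub
        _ ≤ finrank L ↥(S.map π₂) := scattered_inter_le h U₂ h₂ hd₂ _
            (le_trans (Submodule.finrank_map_le _ _) (le_of_eq hS))
    -- kernel bound
    have hker_le : finrank K ↥(LinearMap.ker g) ≤ finrank L ↥(S ⊓ LinearMap.ker π₂) := by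
      set T₁ : Submodule L V₁ := (S ⊓ LinearMap.ker π₂).map (LinearMap.fst L V₁ V₂) with hT₁
      have hkey : ∀ w : ↥(LinearMap.ker g),
          ((w : ↥W) : V₁ × V₂).1 ∈ U₁ ⊓ T₁.restrictScalars K := by
        rintro ⟨⟨⟨v₁, v₂⟩, hw⟩, hkerw⟩
        have hv₂ : v₂ = 0 := hkerw
        refine ⟨hw.1.1, ⟨(v₁, v₂), ⟨hw.2, hv₂⟩, rfl⟩⟩
      let e : ↥(LinearMap.ker g) →ₗ[K] ↥(U₁ ⊓ T₁.restrictScalars K) :=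
        { toFun := fun w => ⟨((w : ↥W) : V₁ × V₂).1, hkey w⟩
          map_add' := fun u v => rfl
          map_smul' := fun c u => rfl }
      have he : Function.Injective e := by
        rintro ⟨⟨⟨u₁, u₂⟩, hu⟩, hku⟩ ⟨⟨⟨w₁, w₂⟩, hw⟩, hkw⟩ huw
        have h1 : u₁ = w₁ := congrArg Subtype.val huw
        have h2 : u₂ = 0 := hku
        have h3 : w₂ = 0 := hkw
        apply Subtype.ext
        apply Subtype.ext
        rw [Prod.ext_iff]
        exact ⟨h1, h2.trans h3.symm⟩
      calc finrank K ↥(LinearMap.ker g) ≤ finrank K ↥(U₁ ⊓ T₁.restrictScalars K) :=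
            LinearMap.finrank_le_finrank_of_injective he
        _ ≤ finrank L ↥T₁ := scattered_inter_le h U₁ h₁ hd₁ _ (by
            calc finrank L ↥T₁ ≤ finrank L ↥(S ⊓ LinearMap.ker π₂) :=
                  Submodule.finrank_map_le _ _
              _ ≤ finrank L ↥S := Submodule.finrank_mono inf_le_left
              _ ≤ h := le_of_eq hS)
        _ ≤ finrank L ↥(S ⊓ LinearMap.ker π₂) := Submodule.finrank_map_le _ _
    omega

end Prod

section Transport
variable {K L : Type*} {V : Type*} {V' : Type*} [Field K] [Field L] [Algebra K L]
  [AddCommGroup V] [Module L V] [Module K V] [IsScalarTower K L V]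
  [AddCommGroup V'] [Module L V'] [Module K V'] [IsScalarTower K L V']

lemma transport_scattered (e : V ≃ₗ[L] V') (h : ℕ) (U : Submodule K V)
    (hU : IsHScattered K L V h U) :
    IsHScattered K L V' h (U.map (e.restrictScalars K).toLinearMap) ∧
      finrank K ↥(U.map (e.restrictScalars K).toLinearMap) = finrank K ↥U := by
  set eK : V →ₗ[K] V' := (e.restrictScalars K).toLinearMap with heK
  have heKapp : ∀ x : V, eK x = e x := fun x => rfl
  have heKinj : Function.Injective eK := (e.restrictScalars K).injective
  refine ⟨⟨?_, ?_⟩, ?_⟩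
  · -- spanning
    have him : (↑(U.map eK) : Set V') = e.toLinearMap '' (U : Set V) := by
      ext x
      simp [Submodule.mem_map, heKapp]
    rw [him, ← Submodule.map_span, hU.1, Submodule.map_top, LinearEquiv.range]
  · intro S' hS'
    set S : Submodule L V := S'.map (e.symm : V' →ₗ[L] V) with hSdef
    have hSrank : finrank L ↥S = h := by
      rw [hSdef, ← hS']
      exact (S'.equivMapOfInjective _ e.symm.injective).finrank_eq.symm
    have hinter : U.map eK ⊓ S'.restrictScalars K = (U ⊓ S.restrictScalars K).map eK := by
      ext x
      constructor
      · rintro ⟨⟨u, hu, rfl⟩, hxS'⟩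
        refine ⟨u, ⟨hu, ?_⟩, rfl⟩
        refine ⟨eK u, hxS', ?_⟩
        rw [heKapp]
        exact e.symm_apply_apply u
      · rintro ⟨u, ⟨hu, huS⟩, rfl⟩
        refine ⟨⟨u, hu, rfl⟩, ?_⟩
        obtain ⟨w, hw, hwu⟩ := huS
        have : eK u = w := by rw [heKapp, ← hwu]; exact e.apply_symm_apply w
        rw [this]
        exact hw
    rw [hinter]
    rw [((U ⊓ S.restrictScalars K).equivMapOfInjective eK heKinj).finrank_eq.symm]
    exact hSrank ▸ hU.2 S hSrank
  · exact (U.equivMapOfInjective eK heKinj).finrank_eq.symm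

end Transport

section ProdRank
variable {K V₁ V₂ : Type*} [Field K]
  [AddCommGroup V₁] [Module K V₁] [AddCommGroup V₂] [Module K V₂]
  [FiniteDimensional K V₁] [FiniteDimensional K V₂]

lemma finrank_prod_submodule (U₁ : Submodule K V₁) (U₂ : Submodule K V₂) :
    finrank K ↥(U₁.prod U₂) = finrank K ↥U₁ + finrank K ↥U₂ := by
  let e : (↥U₁ × ↥U₂) ≃ₗ[K] ↥(U₁.prod U₂) :=
    { toFun := fun p => ⟨((p.1 : V₁), (p.2 : V₂)), ⟨p.1.2, p.2.2⟩⟩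
      invFun := fun w => (⟨(w : V₁ × V₂).1, w.2.1⟩, ⟨(w : V₁ × V₂).2, w.2.2⟩)
      map_add' := fun u v => rfl
      map_smul' := fun c u => rfl
      left_inv := fun p => rfl
      right_inv := fun w => rfl }
  rw [← e.finrank_eq, Module.finrank_prod]

end ProdRank

section Main
variable (K L : Type*) [Field K] [Fintype K] [Field L] [Algebra K L] [FiniteDimensional K L]

lemma main_aux (h n : ℕ) (hn : finrank K L = n) (hnh : h + 1 ≤ n) (t : ℕ) :
    ∃ U : Submodule K (Fin ((h + 1) * (t + 1)) → L),
      IsHScattered K L (Fin ((h + 1) * (t + 1)) → L) h U ∧ finrank K ↥U = n * (t + 1) := by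
  induction t with
  | zero =>
    obtain ⟨hscat, hrank⟩ := base_case K L h n hn hnh
    have hfr : finrank L (Fin (h + 1) → L) = finrank L (Fin ((h + 1) * (0 + 1)) → L) := by
      simp [Module.finrank_fin_fun]
    let e : (Fin (h + 1) → L) ≃ₗ[L] (Fin ((h + 1) * (0 + 1)) → L) :=
      LinearEquiv.ofFinrankEq _ _ hfr
    obtain ⟨hs, hr⟩ := transport_scattered e h _ hscat
    exact ⟨_, hs, by rw [hr, hrank]; ring⟩
  | succ t ih =>
    obtain ⟨U', hU'scat, hU'rank⟩ := ih
    obtain ⟨hscat0, hrank0⟩ := base_case K L h n hn hnh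
    have hd₁ : h < finrank L (Fin (h + 1) → L) := by
      rw [Module.finrank_fin_fun]; omega
    have hd₂ : h < finrank L (Fin ((h + 1) * (t + 1)) → L) := by
      rw [Module.finrank_fin_fun]
      calc h < h + 1 := Nat.lt_succ_self h
        _ ≤ (h + 1) * (t + 1) := Nat.le_mul_of_pos_right _ (Nat.succ_pos t)
    have hprod := prod_scattered h _ _ hscat0 hU'scat hd₁ hd₂
    have hfr : finrank L ((Fin (h + 1) → L) × (Fin ((h + 1) * (t + 1)) → L)) =
        finrank L (Fin ((h + 1) * (t + 1 + 1)) → L) := by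
      rw [Module.finrank_prod, Module.finrank_fin_fun, Module.finrank_fin_fun,
        Module.finrank_fin_fun]
      ring
    let e : ((Fin (h + 1) → L) × (Fin ((h + 1) * (t + 1)) → L)) ≃ₗ[L]
        (Fin ((h + 1) * (t + 1 + 1)) → L) := LinearEquiv.ofFinrankEq _ _ hfr
    haveI : FiniteDimensional K L := inferInstance
    obtain ⟨hs, hr⟩ := transport_scattered e h _ hprod
    refine ⟨_, hs, ?_⟩
    rw [hr]
    haveI : FiniteDimensional K (Fin (h + 1) → L) := Module.Finite.trans L _
    haveI : FiniteDimensional K (Fin ((h + 1) * (t + 1)) → L) := Module.Finite.trans L _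
    rw [finrank_prod_submodule, hrank0, hU'rank]
    ring

end Main

theorem stmt4 (n r h : ℕ) (K L V : Type*) [Field K] [Fintype K] [Field L] [Algebra K L]
    [AddCommGroup V] [Module L V] [Module K V] [IsScalarTower K L V]
    [FiniteDimensional K L] [FiniteDimensional L V]
    (hn : Module.finrank K L = n) (hr : Module.finrank L V = r)
    (h0 : 0 < h) (hdvd : (h + 1) ∣ r) (hnh : h + 1 ≤ n) :
    ∃ U : Submodule K V, IsHScattered K L V h U ∧
      Module.finrank K ↥U = r * n / (h + 1) := by
  rcases Nat.eq_zero_or_pos r with hr0 | hrpos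
  · -- degenerate case r = 0
    subst hr0
    haveI : Subsingleton V := by
      rw [← Module.finrank_zero_iff (R := L)]
      exact hr
    refine ⟨⊥, ⟨?_, ?_⟩, ?_⟩
    · apply Submodule.eq_top_iff'.mpr
      intro x
      rw [Subsingleton.elim x 0]
      exact Submodule.zero_mem _
    · intro S hS
      exfalso
      have : finrank L ↥S ≤ finrank L V := Submodule.finrank_le S
      omega
    · simp
  · obtain ⟨t', ht'⟩ := hdvd
    have ht'pos : 0 < t' := by
      rcases Nat.eq_zero_or_pos t' with h0' | h0'
      · subst h0'; simp at ht'; omega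
      · exact h0'
    set t := t' - 1 with htdef
    have hrt : r = (h + 1) * (t + 1) := by
      have htt : t + 1 = t' := by omega
      rw [htt]; exact ht'
    obtain ⟨U, hUscat, hUrank⟩ := main_aux K L h n hn hnh t
    have hfr : finrank L (Fin ((h + 1) * (t + 1)) → L) = finrank L V := by
      rw [Module.finrank_fin_fun, hr, hrt]
    let e : (Fin ((h + 1) * (t + 1)) → L) ≃ₗ[L] V := LinearEquiv.ofFinrankEq _ _ hfr
    obtain ⟨hs, hrk⟩ := transport_scattered e h _ hUscat
    refine ⟨_, hs, ?_⟩
    rw [hrk, hUrank, hrt]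
    have harith : (h + 1) * (t + 1) * n = (h + 1) * ((t + 1) * n) := by ring
    rw [harith, Nat.mul_div_cancel_left _ (Nat.succ_pos h)]
    ring
end

section
/- Let V be an r-dimensional L-vector space and let U be an h-scattered K-subspace of V with (h+1)·dim_K U = r·n (i.e., U is a maximum h-scattered subspace of dimension rn/(h+1)). Then for every (r−1)-dimensional L-subspace W of V one has r·n/(h+1) − n ≤ dim_K(U ∩ W) ≤ r·n/(h+1) − n + h. -/
/-!
The lower bound is the dimension formula for `U ⊓ W` and `U ⊔ W` inside the `rn`-dimensional
`K`-space `V`. For the upper bound take a nonzero `L`-functional `φ` vanishing on `W`; it suffices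
that `φ(U)` has `K`-dimension at least `n - h`. Scatteredness makes every `K`-independent family of
`h + 1` vectors of `U` also `L`-independent, so for `K`-independent `τ₀, …, τₕ ∈ L` the map
`(uⱼ) ↦ ∑ τⱼ uⱼ` from `U^(h+1)` to `V` is injective, hence bijective as `(h + 1) k = r n`.
If `dim φ(U) < n - h`, fix a nonzero `K`-functional `t` on `L` and choose the `τⱼ` with
`t (τⱼ φ(U)) = 0`; then `t ∘ φ` vanishes on `V = ∑ τⱼ U`, contradicting the surjectivity of `φ`.
-/

open Module Submodule

section LinearAlgebra

variable {K M N : Type*} [Field K] [AddCommGroup M] [Module K M] [AddCommGroup N] [Module K N]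

theorem Submodule.exists_le_finrank_eq [FiniteDimensional K M] (P : Submodule K M) {m : ℕ}
    (hPm : finrank K P ≤ m) (hm : m ≤ finrank K M) :
    ∃ S : Submodule K M, P ≤ S ∧ finrank K S = m := by
  obtain ⟨Q, hPQ⟩ := P.exists_isCompl
  have hQ := Submodule.finrank_add_eq_of_isCompl hPQ
  obtain ⟨f, hf⟩ :=
    exists_linearIndependent_of_le_finrank (R := K) (M := Q) (n := m - finrank K P) (by omega)
  set Q' := span K (Set.range fun i ↦ (f i : M))
  have hQ' : finrank K Q' = m - finrank K P :=
    (finrank_span_eq_card (hf.map' Q.subtype Q.ker_subtype)).trans (by simp)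
  have hdisj : P ⊓ Q' = ⊥ :=
    disjoint_iff.mp (hPQ.disjoint.mono_right (span_le.mpr (by rintro _ ⟨i, rfl⟩; exact (f i).2)))
  refine ⟨P ⊔ Q', le_sup_left, ?_⟩
  have := Submodule.finrank_sup_add_finrank_inf_eq P Q'
  rw [hdisj, finrank_bot] at this
  omega

theorem Submodule.finrank_map_add_finrank_inf_ker (f : M →ₗ[K] N) (U : Submodule K M)
    [FiniteDimensional K U] :
    finrank K (U.map f) + finrank K ↥(U ⊓ LinearMap.ker f) = finrank K U := by
  have := (f.domRestrict U).finrank_range_add_finrank_ker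
  rwa [LinearMap.range_domRestrict, LinearMap.ker_domRestrict, ← top_inf_eq (comap _ _),
    ← comap_subtype_self U, ← comap_inf, (comapSubtypeEquivOfLe inf_le_left).finrank_eq] at this

theorem exists_linearIndependent_mul_mem_ker {L : Type*} [Field L] [Algebra K L]
    [FiniteDimensional K L] (t : L →ₗ[K] K) (S : Submodule K L) {m : ℕ}
    (hm : finrank K S + m ≤ finrank K L) :
    ∃ τ : Fin m → L, LinearIndependent K τ ∧ ∀ j, ∀ s ∈ S, t (τ j * s) = 0 := by
  let B : L →ₗ[K] S →ₗ[K] K := ((LinearMap.mul K L).compr₂ t).compl₂ S.subtype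
  have hB := B.finrank_range_add_finrank_ker
  have hrange : finrank K (LinearMap.range B) ≤ finrank K S :=
    (finrank_le _).trans_eq (Subspace.dual_finrank_eq (K := K) (V := S))
  obtain ⟨f, hf⟩ := exists_linearIndependent_of_le_finrank (R := K) (M := LinearMap.ker B)
    (n := m) (by omega)
  refine ⟨fun j ↦ f j, hf.map' _ (LinearMap.ker B).ker_subtype, fun j s hs ↦ ?_⟩
  exact LinearMap.congr_fun (f j).2 ⟨s, hs⟩

end LinearAlgebra

section Scattered

variable {K L V : Type*} [Field K] [Field L] [Algebra K L] [AddCommGroup V] [Module L V]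
  [Module K V] [IsScalarTower K L V]

theorem Submodule.finrank_span_of_tower_le (U : Submodule K V)
    [FiniteDimensional K U] : finrank L (span L (U : Set V)) ≤ finrank K U := by
  let b := Module.finBasis K U
  have hb : span K (Set.range fun i ↦ (b i : V)) = U := by
    have := congrArg (map U.subtype) b.span_eq
    rwa [map_span, map_subtype_top, ← Set.range_comp] at this
  calc finrank L (span L (U : Set V))
      = finrank L (span L (Set.range fun i ↦ (b i : V))) := by
        rw [← span_span_of_tower K L (Set.range _), hb]
    _ ≤ finrank K U := by
        simpa [Set.finrank] using finrank_range_le_card (R := L) fun i ↦ (b i : V)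

def sumSMul (U : Submodule K V) {ι : Type*} [Fintype ι] (τ : ι → L) : (ι → U) →ₗ[K] V where
  toFun u := ∑ j, τ j • (u j : V)
  map_add' u w := by simp only [Pi.add_apply, coe_add, smul_add, Finset.sum_add_distrib]
  map_smul' c u := by
    simp only [Pi.smul_apply, coe_smul, smul_comm (τ _) c, Finset.smul_sum, RingHom.id_apply]

theorem sumSMul_apply (U : Submodule K V) {ι : Type*} [Fintype ι] (τ : ι → L) (u : ι → U) :
    sumSMul U τ u = ∑ j, τ j • (u j : V) := rfl

variable {h : ℕ} {U : Submodule K V}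

theorem IsHScattered.linearIndependent [FiniteDimensional K V] [FiniteDimensional L V]
    (hU : IsHScattered K L V h U) (hh : h ≤ finrank L V) {v : Fin (h + 1) → V}
    (hvU : ∀ i, v i ∈ U) (hv : LinearIndependent K v) : LinearIndependent L v := by
  rw [linearIndependent_iff_card_eq_finrank_span, Fintype.card_fin]
  by_contra hne
  have hle : finrank L (span L (Set.range v)) ≤ h := by
    have := finrank_range_le_card (R := L) v
    rw [Fintype.card_fin] at this
    exact Nat.le_of_lt_succ (lt_of_le_of_ne this (Ne.symm hne))
  obtain ⟨S, hvS, hS⟩ := (span L (Set.range v)).exists_le_finrank_eq hle hh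
  have hvUS : span K (Set.range v) ≤ U ⊓ S.restrictScalars K :=
    span_le.mpr <| Set.range_subset_iff.mpr fun i ↦ ⟨hvU i, hvS (subset_span ⟨i, rfl⟩)⟩
  have hcard := finrank_span_eq_card hv
  rw [Fintype.card_fin] at hcard
  have := hcard ▸ finrank_mono hvUS
  have := hU.2 S hS
  omega

theorem IsHScattered.injective_sumSMul [FiniteDimensional K V] [FiniteDimensional L V]
    (hU : IsHScattered K L V h U) (hh : h + 1 ≤ finrank L V) {τ : Fin (h + 1) → L}
    (hτ : LinearIndependent K τ) : Function.Injective (sumSMul U τ) := by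
  rw [← LinearMap.ker_eq_bot, eq_bot_iff]
  intro u hu
  have hUdim : h + 1 ≤ finrank K U := by
    have := U.finrank_span_of_tower_le (L := L)
    rw [hU.1, finrank_top] at this
    omega
  obtain ⟨Y, huY, hY⟩ := (span K (Set.range u)).exists_le_finrank_eq
    ((finrank_range_le_card u).trans_eq (Fintype.card_fin _)) hUdim
  let y := finBasisOfFinrankEq K Y hY
  let yV : Fin (h + 1) → V := fun l ↦ ((y l : U) : V)
  have hyL : LinearIndependent L yV :=
    hU.linearIndependent (by omega) (fun l ↦ (y l : U).2)
      ((y.linearIndependent.map' Y.subtype Y.ker_subtype).map' U.subtype U.ker_subtype)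
  let c : Fin (h + 1) × Fin (h + 1) → K := fun p ↦
    y.repr ⟨u p.1, huY (subset_span ⟨p.1, rfl⟩)⟩ p.2
  have hu_eq : ∀ j, (u j : V) = ∑ l, c (j, l) • yV l := fun j ↦ by
    have := congrArg (fun x : Y ↦ ((x : U) : V)) (y.sum_repr ⟨u j, huY (subset_span ⟨j, rfl⟩)⟩)
    simp only [coe_sum, coe_smul] at this
    exact this.symm
  have hc : ∑ p, c p • (τ p.1 • yV p.2) = 0 := by
    simp_rw [Fintype.sum_prod_type, smul_comm (c _) (τ _), ← Finset.smul_sum, ← hu_eq]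
    exact hu
  have hc0 := Fintype.linearIndependent_iff.mp (linearIndependent_smul hτ hyL) c hc
  ext j
  simp [hu_eq j, hc0]

theorem IsHScattered.finrank_le_finrank_map_add [FiniteDimensional K L] [FiniteDimensional L V]
    (hU : IsHScattered K L V h U)
    (hh : h + 1 ≤ finrank L V) (hdim : (h + 1) * finrank K U = finrank L V * finrank K L)
    {φ : Module.Dual L V} (hφ : φ ≠ 0) :
    finrank K L ≤ finrank K (U.map (φ.restrictScalars K)) + h := by
  have := Module.Finite.trans L V (R := K)
  by_contra! hlt
  obtain ⟨t, ht, -⟩ := (⊥ : Submodule K L).exists_le_ker_of_lt_top bot_lt_top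
  obtain ⟨τ, hτ, hτS⟩ := exists_linearIndependent_mul_mem_ker t (U.map (φ.restrictScalars K))
    (m := h + 1) (by omega)
  have hsurj : Function.Surjective (sumSMul U τ) := by
    refine (LinearMap.injective_iff_surjective_of_finrank_eq_finrank ?_).mp
      (hU.injective_sumSMul hh hτ)
    rw [Module.finrank_pi_fintype, Finset.sum_const, Finset.card_univ, Fintype.card_fin,
      smul_eq_mul, hdim, ← Module.finrank_mul_finrank K L V, mul_comm]
  apply ht
  ext x
  obtain ⟨v, rfl⟩ := LinearMap.surjective_of_ne_zero hφ x
  obtain ⟨u, rfl⟩ := hsurj v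
  rw [LinearMap.zero_apply, sumSMul_apply, map_sum, map_sum]
  simp only [map_smul, smul_eq_mul]
  exact Finset.sum_eq_zero fun j _ ↦ hτS j _ (mem_map_of_mem (f := φ.restrictScalars K) (u j).2)

end Scattered

theorem stmt5_general (n r h : ℕ) (K L V : Type*) [Field K] [Field L] [Algebra K L]
    [AddCommGroup V] [Module L V] [Module K V] [IsScalarTower K L V]
    [FiniteDimensional K L] [FiniteDimensional L V]
    (hn : Module.finrank K L = n) (hr : Module.finrank L V = r)
    (h0 : 0 < h) (hhr : h ≤ r - 1)
    (U : Submodule K V) (hU : IsHScattered K L V h U)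
    (hdim : (h + 1) * Module.finrank K ↥U = r * n) :
    ∀ W : Submodule L V, Module.finrank L W = r - 1 →
      r * n / (h + 1) ≤ Module.finrank K ↥(U ⊓ W.restrictScalars K) + n ∧
      Module.finrank K ↥(U ⊓ W.restrictScalars K) + n ≤ r * n / (h + 1) + h := by
  intro W hW
  have := Module.Finite.trans L V (R := K)
  rw [← hdim, Nat.mul_div_cancel_left _ h.succ_pos]
  have hVK : finrank K V = r * n := by rw [← Module.finrank_mul_finrank K L V, hn, hr, mul_comm]
  have hWK : finrank K (W.restrictScalars K) = r * n - n := by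
    rw [← Nat.sub_one_mul, ← hW, ← hn, mul_comm]
    exact (Module.finrank_mul_finrank K L W).symm
  have hn_le : n ≤ r * n := Nat.le_mul_of_pos_left n (by omega)
  constructor
  · have := Submodule.finrank_sup_add_finrank_inf_eq U (W.restrictScalars K)
    have := (U ⊔ W.restrictScalars K).finrank_le
    omega
  · obtain ⟨φ, hφ, hWφ⟩ := W.exists_le_ker_of_lt_top <| lt_top_iff_ne_top.mpr fun hWtop ↦ by
      rw [hWtop, finrank_top] at hW
      omega
    have hrank := U.finrank_map_add_finrank_inf_ker (φ.restrictScalars K)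
    have hker : finrank K ↥(U ⊓ W.restrictScalars K) ≤
        finrank K ↥(U ⊓ LinearMap.ker (φ.restrictScalars K)) :=
      finrank_mono (inf_le_inf_left U (restrictScalars_mono K hWφ))
    have := hU.finrank_le_finrank_map_add (by omega) (by rw [hdim, hn, hr]) hφ
    omega

theorem stmt5 (n r h : ℕ) (K L V : Type*) [Field K] [Fintype K] [Field L] [Algebra K L]
    [AddCommGroup V] [Module L V] [Module K V] [IsScalarTower K L V]
    [FiniteDimensional K L] [FiniteDimensional L V]
    (hn : Module.finrank K L = n) (hr : Module.finrank L V = r)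
    (h0 : 0 < h) (hhr : h ≤ r - 1)
    (U : Submodule K V) (hU : IsHScattered K L V h U)
    (hdim : (h + 1) * Module.finrank K ↥U = r * n) :
    ∀ W : Submodule L V, Module.finrank L W = r - 1 →
      r * n / (h + 1) ≤ Module.finrank K ↥(U ⊓ W.restrictScalars K) + n ∧
      Module.finrank K ↥(U ⊓ W.restrictScalars K) + n ≤ r * n / (h + 1) + h :=
  stmt5_general n r h K L V hn hr h0 hhr U hU hdim
end

section
/- Let K be a finite field with q elements and let L be a field extension of K of degree n with n ≥ r ≥ 2. Then the K-subspace U = {(x, x^q, x^{q²}, …, x^{q^{r−1}}) : x ∈ L} of L^r is an (r−1)-scattered K-subspace of L^r of K-dimension n; that is, U spans L^r over L, dim_K U = n, and every (r−1)-dimensional L-subspace (hyperplane) of L^r meets U in a K-subspace of K-dimension at most r−1. -/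
open Polynomial in
/-- A nonzero `q`-polynomial of `q`-degree at most `r-1` has at most `q^(r-1)` roots. -/
lemma aux_root_count {q r : ℕ} {L : Type*} [Field L] [Fintype L] [DecidableEq L]
    (hq2 : 2 ≤ q) (a : Fin r → L) (ha : a ≠ 0) :
    (Finset.univ.filter (fun x : L => ∑ i : Fin r, a i * x ^ q ^ (i : ℕ) = 0)).card
      ≤ q ^ (r - 1) := by
  obtain ⟨j, hj⟩ := Function.ne_iff.mp ha
  set P : L[X] := ∑ i : Fin r, C (a i) * X ^ (q ^ (i : ℕ)) with hP
  have hcoeff : P.coeff (q ^ (j : ℕ)) = a j := by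
    rw [hP, finset_sum_coeff, Finset.sum_eq_single j]
    · simp [coeff_C_mul, coeff_X_pow]
    · intro i _ hij
      have hne : q ^ (j : ℕ) ≠ q ^ (i : ℕ) := by
        intro h
        exact hij (Fin.ext (Nat.pow_right_injective hq2 h).symm)
      simp [coeff_C_mul, coeff_X_pow, hne]
    · simp
  have hP0 : P ≠ 0 := fun h => hj (by simpa [h] using hcoeff.symm)
  have hdeg : P.natDegree ≤ q ^ (r - 1) := by
    apply natDegree_sum_le_of_forall_le
    intro i _
    refine le_trans (natDegree_C_mul_le _ _) ?_
    rw [natDegree_X_pow]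
    exact Nat.pow_le_pow_right (by omega) (by omega)
  have hsub : (Finset.univ.filter (fun x : L => ∑ i : Fin r, a i * x ^ q ^ (i : ℕ) = 0))
      ⊆ P.roots.toFinset := by
    intro x hx
    rw [Finset.mem_filter] at hx
    rw [Multiset.mem_toFinset, mem_roots hP0]
    simpa [hP, eval_finset_sum, IsRoot] using hx.2
  calc (Finset.univ.filter (fun x : L => ∑ i : Fin r, a i * x ^ q ^ (i : ℕ) = 0)).card
      ≤ P.roots.toFinset.card := Finset.card_le_card hsub
    _ ≤ Multiset.card P.roots := Multiset.toFinset_card_le _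
    _ ≤ P.natDegree := P.card_roots'
    _ ≤ q ^ (r - 1) := hdeg

theorem stmt6 (q n r : ℕ) (K L : Type*) [Field K] [Fintype K] [Field L] [Algebra K L]
    [FiniteDimensional K L]
    (hq : Fintype.card K = q) (hn : Module.finrank K L = n)
    (hr2 : 2 ≤ r) (hrn : r ≤ n) :
    ∃ U : Submodule K (Fin r → L),
      (U : Set (Fin r → L)) = {v : Fin r → L | ∃ x : L, v = fun i : Fin r => x ^ q ^ (i : ℕ)} ∧
      IsHScattered K L (Fin r → L) (r - 1) U ∧
      Module.finrank K ↥U = n := by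
  classical
  haveI : NeZero r := ⟨by omega⟩
  haveI : Finite L := Module.finite_of_finite K
  haveI : Fintype L := Fintype.ofFinite L
  have hq2 : 2 ≤ q := hq ▸ Fintype.one_lt_card
  -- characteristic setup
  obtain ⟨f0, hp_prime, hcardK⟩ := FiniteField.card K (ringChar K)
  haveI : Fact (Nat.Prime (ringChar K)) := ⟨hp_prime⟩
  haveI : CharP L (ringChar K) :=
    charP_of_injective_algebraMap (algebraMap K L).injective (ringChar K)
  have hadd : ∀ (m : ℕ) (x y : L), (x + y) ^ q ^ m = x ^ q ^ m + y ^ q ^ m := by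
    intro m x y
    rw [← hq, hcardK, ← pow_mul]
    exact add_pow_char_pow x y (ringChar K) (f0 * m)
  have hsmul : ∀ (m : ℕ) (c : K) (x : L),
      (algebraMap K L c * x) ^ q ^ m = algebraMap K L c * x ^ q ^ m := by
    intro m c x
    rw [mul_pow, ← hq, ← map_pow, FiniteField.pow_card_pow]
  -- the linearized map
  let φ : L →ₗ[K] (Fin r → L) :=
    { toFun := fun x => fun i => x ^ q ^ (i : ℕ)
      map_add' := fun x y => by funext i; exact hadd (i : ℕ) x y
      map_smul' := fun c x => by
        funext i
        show (c • x) ^ q ^ (i : ℕ) = c • (x ^ q ^ (i : ℕ))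
        rw [Algebra.smul_def, Algebra.smul_def, hsmul] }
  have hφ : ∀ x : L, φ x = fun i : Fin r => x ^ q ^ (i : ℕ) := fun _ => rfl
  have hφ0 : ∀ x : L, φ x 0 = x := by
    intro x
    show x ^ q ^ ((0 : Fin r) : ℕ) = x
    simp
  -- every nonzero functional is given by a nonzero coefficient vector
  have hdual : ∀ f : (Fin r → L) →ₗ[L] L, f ≠ 0 →
      ∃ a : Fin r → L, a ≠ 0 ∧ ∀ v : Fin r → L, f v = ∑ i, v i * a i := by
    intro f hf0
    have hfv : ∀ v : Fin r → L, f v = ∑ i, v i * f (Pi.single i 1) := by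
      intro v
      have hv : v = ∑ i, v i • (Pi.single i 1 : Fin r → L) := by
        funext k
        simp [Pi.single_apply, Finset.sum_apply, mul_ite]
      conv_lhs => rw [hv]
      rw [map_sum]
      simp [smul_eq_mul]
    refine ⟨fun i => f (Pi.single i 1), ?_, hfv⟩
    intro h
    apply hf0
    apply LinearMap.ext
    intro v
    rw [hfv v]
    have h' : ∀ i : Fin r, f (Pi.single i (1 : L)) = 0 := fun i => congrFun h i
    simp [h']
  refine ⟨LinearMap.range φ, ?_, ⟨?_, ?_⟩, ?_⟩
  · ext v
    simp only [LinearMap.mem_range, SetLike.mem_coe, Set.mem_setOf_eq]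
    constructor
    · rintro ⟨x, rfl⟩; exact ⟨x, rfl⟩
    · rintro ⟨x, rfl⟩; exact ⟨x, rfl⟩
  -- span over L is everything
  · by_contra hne
    obtain ⟨f, hf0, hfbot⟩ := Submodule.exists_dual_map_eq_bot_of_lt_top
      (lt_top_iff_ne_top.2 hne) inferInstance
    obtain ⟨a, ha, hfv⟩ := hdual f hf0
    have hvan : ∀ x : L, ∑ i : Fin r, a i * x ^ q ^ (i : ℕ) = 0 := by
      intro x
      have hmem : φ x ∈ Submodule.span L
          ((LinearMap.range φ : Submodule K (Fin r → L)) : Set (Fin r → L)) :=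
        Submodule.subset_span ⟨x, rfl⟩
      have h0 : f (φ x) ∈ (⊥ : Submodule L L) := hfbot ▸ Submodule.mem_map_of_mem hmem
      rw [Submodule.mem_bot] at h0
      rw [hfv, hφ x] at h0
      simpa [mul_comm] using h0
    have huniv : (Finset.univ : Finset L) ⊆
        Finset.univ.filter (fun x : L => ∑ i : Fin r, a i * x ^ q ^ (i : ℕ) = 0) := by
      intro x _
      simp [hvan x]
    have h1 : Fintype.card L ≤ q ^ (r - 1) :=
      le_trans (Finset.card_le_card huniv) (aux_root_count hq2 a ha)
    have h2 : Fintype.card L = q ^ n := by rw [Module.card_eq_pow_finrank (K := K), hq, hn]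
    have h3 : q ^ (r - 1) < q ^ n := Nat.pow_lt_pow_right hq2 (by omega)
    omega
  -- hyperplane intersection
  · intro S hS
    have hpi : Module.finrank L (Fin r → L) = r := by simp [Module.finrank_pi]
    have hSlt : S < ⊤ := by
      rcases lt_or_eq_of_le (le_top : S ≤ ⊤) with h | h
      · exact h
      · exfalso
        rw [h, finrank_top, hpi] at hS
        omega
    obtain ⟨f, hf0, hfbot⟩ := Submodule.exists_dual_map_eq_bot_of_lt_top hSlt inferInstance
    obtain ⟨a, ha, hfv⟩ := hdual f hf0
    set W := LinearMap.range φ ⊓ S.restrictScalars K with hW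
    set Z := Finset.univ.filter (fun x : L => ∑ i : Fin r, a i * x ^ q ^ (i : ℕ) = 0) with hZ
    have hrep : ∀ w : ↥W, (w : Fin r → L) = φ ((w : Fin r → L) 0) := by
      intro w
      obtain ⟨x, hx⟩ := (Submodule.mem_inf.mp w.2).1
      rw [← hx, hφ0]
    have hmem : ∀ w : ↥W, (w : Fin r → L) 0 ∈ Z := by
      intro w
      have hwS : (w : Fin r → L) ∈ S := (Submodule.mem_inf.mp w.2).2
      have hfw : f (w : Fin r → L) = 0 := by
        have h0 : f (w : Fin r → L) ∈ (⊥ : Submodule L L) :=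
          hfbot ▸ Submodule.mem_map_of_mem hwS
        rwa [Submodule.mem_bot] at h0
      rw [hfv] at hfw
      rw [hZ, Finset.mem_filter]
      refine ⟨Finset.mem_univ _, ?_⟩
      rw [hrep w, hφ] at hfw
      simpa [mul_comm] using hfw
    have hcardW : Fintype.card ↥W ≤ Z.card := by
      rw [← Fintype.card_coe Z]
      have hinj : Function.Injective
          (fun w : ↥W => (⟨(w : Fin r → L) 0, hmem w⟩ : {x // x ∈ Z})) := by
        intro w1 w2 h12
        have h0 : (w1 : Fin r → L) 0 = (w2 : Fin r → L) 0 := congrArg Subtype.val h12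
        apply Subtype.ext
        rw [hrep w1, hrep w2, h0]
      exact Fintype.card_le_of_injective _ hinj
    have hZle : Z.card ≤ q ^ (r - 1) := aux_root_count hq2 a ha
    have hle : q ^ Module.finrank K ↥W ≤ q ^ (r - 1) := by
      have h := le_trans hcardW hZle
      rwa [Module.card_eq_pow_finrank (K := K) (V := ↥W), hq] at h
    exact (Nat.pow_le_pow_iff_right hq2).mp hle
  · have hinj : Function.Injective φ := by
      intro x y hxy
      rw [← hφ0 x, ← hφ0 y, hxy]
    rw [LinearMap.finrank_range_of_inj hinj, hn]
end

section
/- Let 𝕍 be a k-dimensional L-vector space, let Λ be an r-dimensional L-subspace and Γ a (k−r)-dimensional L-subspace of 𝕍 with Λ ∩ Γ = {0} and Λ + Γ = 𝕍, where k > r. Let W be a K-subspace of 𝕍 with dim_K W = k, span_L W = 𝕍 and W ∩ Γ = {0}, and set U = (W + Γ) ∩ Λ, the intersection of Λ with the K-subspace generated by W and Γ. Let σ be a field automorphism of L and let β : 𝕍 × 𝕍 → L be additive in both arguments, L-linear in the first argument, σ-semilinear in the second argument (β(v, a·w) = σ(a)·β(v, w)), nondegenerate, and reflexive (β(v, w)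 = 0 implies β(w, v) = 0); assume moreover that β(w₁, w₂) ∈ K for all w₁, w₂ ∈ W and that for every nonzero v ∈ W there exists w ∈ W with β(w, v) ≠ 0. If every (r−1)-dimensional L-subspace M of Λ satisfies dim_K(M ∩ U) < k−1, then W ∩ Γ^⊥ = {0}, where Γ^⊥ = {v ∈ 𝕍 : β(v, g) = 0 for all g ∈ Γ}; consequently the image of W in the quotient L-vector space 𝕍/Γ^⊥ is a K-subspace of K-dimension k. -/
theorem stmt7 (n k r : ℕ) (K L VV : Type*) [Field K] [Fintype K] [Field L] [Algebra K L]
    [AddCommGroup VV] [Module L VV] [Module K VV] [IsScalarTower K L VV]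
    [FiniteDimensional K L] [FiniteDimensional L VV]
    (hn : Module.finrank K L = n) (hk : Module.finrank L VV = k) (hkr : r < k)
    (Λ Γ : Submodule L VV)
    (hΛ : Module.finrank L Λ = r) (hΓ : Module.finrank L Γ = k - r)
    (hinf : Λ ⊓ Γ = ⊥) (hsup : Λ ⊔ Γ = ⊤)
    (W : Submodule K VV)
    (hWdim : Module.finrank K ↥W = k)
    (hWspan : Submodule.span L (W : Set VV) = ⊤)
    (hWΓ : W ⊓ Γ.restrictScalars K = ⊥)
    (U : Submodule K VV)
    (hU : U = (W ⊔ Γ.restrictScalars K) ⊓ Λ.restrictScalars K)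
    (σ : L ≃+* L) (β : VV → VV → L)
    (hadd₁ : ∀ v v' w, β (v + v') w = β v w + β v' w)
    (hadd₂ : ∀ v w w', β v (w + w') = β v w + β v w')
    (hlin₁ : ∀ (a : L) (v w : VV), β (a • v) w = a * β v w)
    (hsemi₂ : ∀ (a : L) (v w : VV), β v (a • w) = σ a * β v w)
    (hnondeg : ∀ v : VV, (∀ w : VV, β v w = 0) → v = 0)
    (hrefl : ∀ v w : VV, β v w = 0 → β w v = 0)
    (hWK : ∀ w₁ ∈ W, ∀ w₂ ∈ W, β w₁ w₂ ∈ Set.range (algebraMap K L))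
    (hWnondeg : ∀ v ∈ W, v ≠ 0 → ∃ w ∈ W, β w v ≠ 0)
    (hhyp : ∀ M : Submodule L VV, M ≤ Λ → Module.finrank L M = r - 1 →
      Module.finrank K ↥(M.restrictScalars K ⊓ U) < k - 1) :
    ∀ Γperp : Submodule L VV, (Γperp : Set VV) = {v : VV | ∀ g ∈ Γ, β v g = 0} →
      W ⊓ Γperp.restrictScalars K = ⊥ ∧
      Module.finrank K ↥(Submodule.map (Γperp.mkQ.restrictScalars K) W) = k := by
  intro Γperp hΓperp
  haveI : FiniteDimensional K VV := Module.Finite.trans L VV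
  have hmem : ∀ x : VV, x ∈ Γperp ↔ ∀ g ∈ Γ, β x g = 0 := by
    intro x
    constructor
    · intro hx; have : x ∈ (Γperp : Set VV) := hx
      rw [hΓperp] at this; exact this
    · intro hx; show x ∈ (Γperp : Set VV); rw [hΓperp]; exact hx
  -- main claim
  have main : W ⊓ Γperp.restrictScalars K = ⊥ := by
    rw [Submodule.eq_bot_iff]
    rintro v ⟨hvW, hvP⟩
    by_contra hv0
    -- the linear functional f = β(·, v)
    set f : VV →ₗ[L] L :=
      { toFun := fun w => β w v
        map_add' := fun a b => hadd₁ a b v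
        map_smul' := fun a w => hlin₁ a w v } with hf
    obtain ⟨w₀, hw₀W, hw₀⟩ := hWnondeg v hvW hv0
    have hΓker : Γ ≤ LinearMap.ker f := by
      intro g hg
      simp only [LinearMap.mem_ker, hf, LinearMap.coe_mk, AddHom.coe_mk]
      exact hrefl v g ((hmem v).1 hvP g hg)
    have hΛnot : ¬ Λ ≤ LinearMap.ker f := by
      intro hle
      have : (⊤ : Submodule L VV) ≤ LinearMap.ker f := by
        rw [← hsup]; exact sup_le hle hΓker
      exact hw₀ (this (Submodule.mem_top))
    -- g : restriction of f to Λ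
    set g : ↥Λ →ₗ[L] L := f.comp Λ.subtype with hg
    have hgrange : LinearMap.range g = ⊤ := by
      rcases eq_bot_or_eq_top (LinearMap.range g) with h | h
      · exfalso
        apply hΛnot
        intro x hx
        have : g ⟨x, hx⟩ ∈ LinearMap.range g := ⟨⟨x, hx⟩, rfl⟩
        rw [h] at this
        simpa [hg] using (Submodule.mem_bot L).1 this
      · exact h
    have hgker : Module.finrank L (LinearMap.ker g) = r - 1 := by
      have h1 := LinearMap.finrank_range_add_finrank_ker g
      rw [hgrange, finrank_top, Module.finrank_self, hΛ] at h1
      omega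
    have hr1 : 1 ≤ r := by
      have h1 := LinearMap.finrank_range_add_finrank_ker g
      rw [hgrange, finrank_top, Module.finrank_self, hΛ] at h1
      omega
    -- M = Λ ⊓ ker f
    set M : Submodule L VV := Λ ⊓ LinearMap.ker f with hM
    have hMmap : M = (LinearMap.ker g).map Λ.subtype := by
      ext x
      simp only [hM, Submodule.mem_inf, Submodule.mem_map, LinearMap.mem_ker, hg,
        LinearMap.comp_apply, Submodule.subtype_apply]
      constructor
      · rintro ⟨hxΛ, hxf⟩; exact ⟨⟨x, hxΛ⟩, hxf, rfl⟩
      · rintro ⟨⟨y, hy⟩, hfy, rfl⟩; exact ⟨hy, hfy⟩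
    have hMrank : Module.finrank L M = r - 1 := by
      rw [hMmap, Submodule.finrank_map_subtype_eq]; exact hgker
    -- restriction of f to W over K
    set h : ↥W →ₗ[K] L := (f.restrictScalars K).comp W.subtype with hh
    have hhrange : Module.finrank K (LinearMap.range h) ≤ 1 := by
      have hle : LinearMap.range h ≤ Submodule.span K {(1 : L)} := by
        rintro x ⟨⟨w, hw⟩, rfl⟩
        obtain ⟨c, hc⟩ := hWK w hw v hvW
        have : h ⟨w, hw⟩ = c • (1 : L) := by
          simp [hh, hf, ← hc, Algebra.smul_def]
        rw [this]
        exact Submodule.smul_mem _ _ (Submodule.mem_span_singleton_self _)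
      calc Module.finrank K (LinearMap.range h)
          ≤ Module.finrank K (Submodule.span K {(1 : L)}) := Submodule.finrank_mono hle
        _ = 1 := finrank_span_singleton (one_ne_zero)
    have hhker : k - 1 ≤ Module.finrank K (LinearMap.ker h) := by
      have h1 := LinearMap.finrank_range_add_finrank_ker h
      rw [hWdim] at h1
      omega
    -- projection onto Λ along Γ
    have hcompl : IsCompl Λ Γ := ⟨disjoint_iff.2 hinf, codisjoint_iff.2 hsup⟩
    set π : VV →ₗ[L] ↥Λ := Λ.linearProjOfIsCompl Γ hcompl with hπ
    have hπsub : ∀ x : VV, x - ↑(π x) ∈ Γ := by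
      intro x
      have heq := Submodule.projection_add_projection_eq_self hcompl x
      have h2 : x - ↑(π x) = ↑((Γ.linearProjOfIsCompl Λ hcompl.symm) x) := by
        rw [sub_eq_iff_eq_add']; exact heq.symm
      rw [h2]
      exact ((Γ.linearProjOfIsCompl Λ hcompl.symm) x).2
    -- the embedding ker h → M ⊓ U
    set ψ₀ : ↥(LinearMap.ker h) →ₗ[K] VV :=
      ((Λ.subtype.comp π).restrictScalars K).comp (W.subtype.comp (LinearMap.ker h).subtype)
      with hψ₀
    have hψ₀mem : ∀ x, ψ₀ x ∈ M.restrictScalars K ⊓ U := by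
      rintro ⟨⟨w, hwW⟩, hwker⟩
      have hwf : f w = 0 := by
        simpa [hh] using hwker
      have hγ : w - ↑(π w) ∈ Γ := hπsub w
      show (↑(π w) : VV) ∈ M.restrictScalars K ⊓ U
      constructor
      · refine ⟨(π w).2, ?_⟩
        show f ↑(π w) = 0
        have hz : f (w - ↑(π w)) = 0 := hΓker hγ
        rw [map_sub, hwf, zero_sub, neg_eq_zero] at hz
        exact hz
      · rw [hU]
        refine ⟨?_, (π w).2⟩
        have hrw : (↑(π w) : VV) = w - (w - ↑(π w)) := by abel
        rw [hrw]
        exact Submodule.sub_mem _ (Submodule.mem_sup_left hwW)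
          (Submodule.mem_sup_right hγ)
    have hψ₀inj : Function.Injective ψ₀ := by
      rintro ⟨⟨w, hwW⟩, hwker⟩ ⟨⟨w', hw'W⟩, hw'ker⟩ heq
      have h1 : (↑(π w) : VV) = ↑(π w') := heq
      have h2 : w - w' ∈ Γ := by
        have := Submodule.sub_mem Γ (hπsub w) (hπsub w')
        simpa [h1, sub_sub_sub_cancel_right] using this
      have h3 : w - w' ∈ W ⊓ Γ.restrictScalars K :=
        ⟨Submodule.sub_mem W hwW hw'W, h2⟩
      rw [hWΓ] at h3
      have h4 : w = w' := sub_eq_zero.mp ((Submodule.mem_bot K).1 h3)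
      apply Subtype.ext; apply Subtype.ext; exact h4
    set ψ : ↥(LinearMap.ker h) →ₗ[K] ↥(M.restrictScalars K ⊓ U) :=
      ψ₀.codRestrict _ hψ₀mem with hψ
    have hψinj : Function.Injective ψ := by
      intro a b hab
      apply hψ₀inj
      have := congrArg (Subtype.val) hab
      simpa [hψ] using this
    have hle : k - 1 ≤ Module.finrank K ↥(M.restrictScalars K ⊓ U) :=
      le_trans hhker (LinearMap.finrank_le_finrank_of_injective hψinj)
    have := hhyp M inf_le_left hMrank
    omega
  refine ⟨main, ?_⟩
  set φ : ↥W →ₗ[K] VV ⧸ Γperp := (Γperp.mkQ.restrictScalars K).comp W.subtype with hφ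
  have hφinj : Function.Injective φ := by
    rw [← LinearMap.ker_eq_bot, Submodule.eq_bot_iff]
    rintro ⟨w, hw⟩ hker
    have : w ∈ Γperp := by
      have : Γperp.mkQ w = 0 := hker
      rwa [← LinearMap.mem_ker, Submodule.ker_mkQ] at this
    have : w ∈ W ⊓ Γperp.restrictScalars K := ⟨hw, this⟩
    rw [main] at this
    exact Subtype.ext ((Submodule.mem_bot K).1 this)
  have hrange : LinearMap.range φ = Submodule.map (Γperp.mkQ.restrictScalars K) W := by
    rw [hφ, LinearMap.range_comp, Submodule.range_subtype]
  rw [← hrange, LinearMap.finrank_range_of_inj hφinj, hWdim]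
end

section
/- Let K be a finite field with q elements and let L be a field extension of K of degree n, with integers r, n satisfying 2 ≤ r and n ≥ r+2. Then every (n−r)-dimensional L-vector space contains an (n−r−1)-scattered K-subspace of K-dimension n. -/
/-!
Fix an `L`-basis `b₀, …, b_{m-1}` of `V`, `m = n - r`, and take
`U = {∑ᵢ x^{qⁱ} bᵢ : x ∈ L}`, the image of an injective `K`-linear map, so `dim_K U = n`.
A nonzero `L`-linear form `f` sends `∑ᵢ x^{qⁱ} bᵢ` to `∑ᵢ f(bᵢ) x^{qⁱ}`, a nonzero
`q`-polynomial of degree at most `q^{m-1}`; its zeros form a `K`-subspace of `L` with at most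
`q^{m-1}` elements, hence `dim_K (U ∩ ker f) ≤ m - 1`. An `(m-1)`-dimensional `L`-subspace `S`
lies in the kernel of such an `f`, which bounds `U ∩ S`; and since `m - 1 < n`, no such `f`
vanishes on all of `U`, so `U` spans `V`.
-/

open Polynomial Module

section QPolynomial

variable {R : Type*} {m q : ℕ}

noncomputable def qPolynomial [Semiring R] (q : ℕ) (a : Fin m → R) : R[X] :=
  ∑ i, C (a i) * X ^ q ^ (i : ℕ)

theorem eval_qPolynomial [CommSemiring R] (a : Fin m → R) (x : R) :
    (qPolynomial q a).eval x = ∑ i, a i * x ^ q ^ (i : ℕ) := by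
  simp [qPolynomial, eval_finsetSum]

theorem coeff_qPolynomial_pow [Semiring R] (hq : 1 < q) (a : Fin m → R) (j : Fin m) :
    (qPolynomial q a).coeff (q ^ (j : ℕ)) = a j := by
  have hinj : Function.Injective fun i : Fin m => q ^ (i : ℕ) :=
    (Nat.pow_right_injective hq).comp Fin.val_injective
  simp [qPolynomial, coeff_C_mul, coeff_X_pow, hinj.eq_iff]

theorem qPolynomial_ne_zero [Semiring R] (hq : 1 < q) {a : Fin m → R} (ha : a ≠ 0) :
    qPolynomial q a ≠ 0 := by
  contrapose! ha
  funext j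
  rw [← coeff_qPolynomial_pow hq a j, ha, coeff_zero, Pi.zero_apply]

theorem natDegree_qPolynomial_le [Semiring R] (hq : 0 < q) (a : Fin m → R) :
    (qPolynomial q a).natDegree ≤ q ^ (m - 1) :=
  natDegree_sum_le_of_forall_le _ _ fun i _ =>
    (natDegree_C_mul_X_pow_le _ _).trans (Nat.pow_le_pow_right hq (by omega))

theorem card_le_of_forall_eval_qPolynomial_eq_zero [CommRing R] [IsDomain R]
    (hq : 1 < q) {a : Fin m → R} (ha : a ≠ 0) {Z : Set R}
    (hZ : ∀ x ∈ Z, (qPolynomial q a).eval x = 0) : Nat.card Z ≤ q ^ (m - 1) := by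
  classical
  have hP := qPolynomial_ne_zero hq ha
  have hsub : Z ⊆ ((qPolynomial q a).roots.toFinset : Set R) := fun x hx => by
    simpa [mem_roots hP] using hZ x hx
  calc Nat.card Z ≤ Nat.card ((qPolynomial q a).roots.toFinset : Set R) :=
        Nat.card_mono (Finset.finite_toSet _) hsub
    _ = (qPolynomial q a).roots.toFinset.card := Nat.card_eq_finsetCard _
    _ ≤ (qPolynomial q a).natDegree :=
        (Multiset.toFinset_card_le _).trans (card_roots' _)
    _ ≤ q ^ (m - 1) := natDegree_qPolynomial_le (by omega) a

end QPolynomial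

theorem Submodule.exists_dual_ne_zero_le_ker_of_lt_top {L V : Type*} [Field L]
    [AddCommGroup V] [Module L V] {S : Submodule L V} (hS : S < ⊤) :
    ∃ f : Dual L V, f ≠ 0 ∧ S ≤ LinearMap.ker f := by
  obtain ⟨f, hf, hfS⟩ := exists_dual_map_eq_bot_of_lt_top hS inferInstance
  exact ⟨f, hf, LinearMap.le_ker_iff_map.mpr hfS⟩

section FiniteField

variable {K L : Type*} [Field K] [Fintype K] [Field L] [Algebra K L]

theorem finrank_le_of_forall_eval_qPolynomial_eq_zero [FiniteDimensional K L] {m : ℕ}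
    {a : Fin m → L} (ha : a ≠ 0) (W : Submodule K L)
    (hW : ∀ x ∈ W, (qPolynomial (Fintype.card K) a).eval x = 0) : finrank K W ≤ m - 1 := by
  have hcard := card_le_of_forall_eval_qPolynomial_eq_zero Fintype.one_lt_card ha hW
  change Nat.card W ≤ _ at hcard
  rwa [Module.natCard_eq_pow_finrank (K := K), Nat.card_eq_fintype_card,
    Nat.pow_le_pow_iff_right Fintype.one_lt_card] at hcard

variable (K) in
noncomputable def frobeniusPow (i : ℕ) : L →ₗ[K] L :=
  (FiniteField.frobeniusAlgHom K L).toLinearMap ^ i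

theorem frobeniusPow_apply (i : ℕ) (x : L) : frobeniusPow K i x = x ^ Fintype.card K ^ i := by
  rw [frobeniusPow, Module.End.pow_apply]
  exact congrFun (pow_iterate _ i) x

variable {V : Type*} [AddCommGroup V] [Module L V] [Module K V] [IsScalarTower K L V] {m : ℕ}

variable (K) in
noncomputable def qLinearizedMap (b : Basis (Fin m) L V) : L →ₗ[K] V :=
  ∑ i : Fin m, (frobeniusPow K i).smulRight (b i)

theorem qLinearizedMap_apply (b : Basis (Fin m) L V) (x : L) :
    qLinearizedMap K b x = ∑ i : Fin m, (x ^ Fintype.card K ^ (i : ℕ)) • b i := by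
  simp [qLinearizedMap, frobeniusPow_apply]

theorem apply_qLinearizedMap_eq_eval (b : Basis (Fin m) L V) (f : Dual L V) (x : L) :
    f (qLinearizedMap K b x) = (qPolynomial (Fintype.card K) (f ∘ b)).eval x := by
  simp [qLinearizedMap_apply, eval_qPolynomial, mul_comm]

theorem qLinearizedMap_injective (b : Basis (Fin m) L V) (hm : 0 < m) :
    Function.Injective (qLinearizedMap K b) := by
  rw [injective_iff_map_eq_zero]
  intro x hx
  rw [qLinearizedMap_apply] at hx
  simpa using Fintype.linearIndependent_iff.mp b.linearIndependent _ hx ⟨0, hm⟩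

theorem finrank_range_qLinearizedMap (b : Basis (Fin m) L V) (hm : 0 < m) :
    finrank K (LinearMap.range (qLinearizedMap K b)) = finrank K L :=
  LinearMap.finrank_range_of_inj (qLinearizedMap_injective b hm)

theorem finrank_range_qLinearizedMap_inf_ker_le [FiniteDimensional K L] (b : Basis (Fin m) L V)
    {f : Dual L V} (hf : f ≠ 0) :
    finrank K ↥(LinearMap.range (qLinearizedMap K b) ⊓ (LinearMap.ker f).restrictScalars K) ≤
      m - 1 := by
  have hfb : f ∘ b ≠ 0 := fun h => hf (b.ext fun i => congrFun h i)
  set φ := qLinearizedMap K b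
  set g := f.restrictScalars K ∘ₗ φ
  have hle : LinearMap.range φ ⊓ (LinearMap.ker f).restrictScalars K ≤
      (LinearMap.ker g).map φ := by
    rintro _ ⟨⟨x, rfl⟩, hx⟩
    exact ⟨x, hx, rfl⟩
  calc _ ≤ finrank K ((LinearMap.ker g).map φ) := Submodule.finrank_mono hle
    _ ≤ finrank K (LinearMap.ker g) := Submodule.finrank_map_le _ _
    _ ≤ m - 1 := finrank_le_of_forall_eval_qPolynomial_eq_zero hfb _ fun x hx => by
        rw [← apply_qLinearizedMap_eq_eval]
        exact hx

theorem isHScattered_range_qLinearizedMap [FiniteDimensional K L] (b : Basis (Fin m) L V)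
    (hm : 0 < m) (hmn : m - 1 < finrank K L) :
    IsHScattered K L V (m - 1) (LinearMap.range (qLinearizedMap K b)) := by
  set U := LinearMap.range (qLinearizedMap K b)
  constructor
  · by_contra hspan
    obtain ⟨f, hf, hUf⟩ :=
      Submodule.exists_dual_ne_zero_le_ker_of_lt_top (lt_top_iff_ne_top.mpr hspan)
    have hU : U ≤ (LinearMap.ker f).restrictScalars K := fun _ hv =>
      hUf (Submodule.subset_span hv)
    have := finrank_range_qLinearizedMap_inf_ker_le (K := K) b hf
    rw [inf_eq_left.mpr hU, finrank_range_qLinearizedMap b hm] at this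
    omega
  · intro S hS
    have hSV : finrank L S < finrank L V := by
      rw [hS, finrank_eq_card_basis b, Fintype.card_fin]
      omega
    obtain ⟨f, hf, hSf⟩ :=
      Submodule.exists_dual_ne_zero_le_ker_of_lt_top (Submodule.lt_top_of_finrank_lt_finrank hSV)
    exact (Submodule.finrank_mono (inf_le_inf_left U hSf)).trans
      (finrank_range_qLinearizedMap_inf_ker_le b hf)

end FiniteField

theorem stmt9_general (n r : ℕ) (K L V : Type*) [Field K] [Fintype K] [Field L] [Algebra K L]
    [AddCommGroup V] [Module L V] [Module K V] [IsScalarTower K L V]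
    [FiniteDimensional K L] [FiniteDimensional L V]
    (hn : Module.finrank K L = n) (hnr : r + 2 ≤ n)
    (hV : Module.finrank L V = n - r) :
    ∃ U : Submodule K V, IsHScattered K L V (n - r - 1) U ∧
      Module.finrank K ↥U = n := by
  let b : Basis (Fin (n - r)) L V := Module.finBasisOfFinrankEq L V hV
  refine ⟨LinearMap.range (qLinearizedMap K b), ?_, ?_⟩
  · exact isHScattered_range_qLinearizedMap b (by omega) (by omega)
  · rw [finrank_range_qLinearizedMap b (by omega), hn]

theorem stmt9 (n r : ℕ) (K L V : Type*) [Field K] [Fintype K] [Field L] [Algebra K L]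
    [AddCommGroup V] [Module L V] [Module K V] [IsScalarTower K L V]
    [FiniteDimensional K L] [FiniteDimensional L V]
    (hn : Module.finrank K L = n) (hr2 : 2 ≤ r) (hnr : r + 2 ≤ n)
    (hV : Module.finrank L V = n - r) :
    ∃ U : Submodule K V, IsHScattered K L V (n - r - 1) U ∧
      Module.finrank K ↥U = n :=
  stmt9_general n r K L V hn hnr hV
end

section
/- Let V be an r-dimensional L-vector space with r ≥ 3 and let U be a 2-scattered K-subspace of V. Then the rank of the linear set L_U is uniquely defined: for every K-subspace W of V with L_W = L_U, one has dim_K W = dim_K U. -/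
/-- The linear set defined by the `K`-subspace `U`: the set of one-dimensional
`L`-subspaces spanned by the nonzero vectors of `U`. -/
def linSet (K L V : Type*) [Field K] [Field L] [Algebra K L]
    [AddCommGroup V] [Module L V] [Module K V] [IsScalarTower K L V]
    (U : Submodule K V) : Set (Submodule L V) :=
  {P | ∃ u ∈ U, u ≠ 0 ∧ P = Submodule.span L {u}}

/-- A `K`-subspace is "scattered-like": every `L`-ratio between its elements is in `K`. -/
def Scat (K L V : Type*) [Field K] [Field L] [Algebra K L]
    [AddCommGroup V] [Module L V] [Module K V] [IsScalarTower K L V]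
    (M : Submodule K V) : Prop :=
  ∀ m ∈ M, m ≠ 0 → ∀ l : L, l • m ∈ M → ∃ c : K, l = algebraMap K L c

section Aux

lemma natCard_ne {α : Type*} [Finite α] (a : α) :
    Nat.card {x : α // x ≠ a} = Nat.card α - 1 := by
  classical
  haveI := Fintype.ofFinite α
  rw [Nat.card_eq_fintype_card, Nat.card_eq_fintype_card]
  have : Fintype.card {x : α // ¬ x = a} = Fintype.card α - Fintype.card {x : α // x = a} :=
    Fintype.card_subtype_compl _
  simpa [Fintype.card_subtype_eq] using this

lemma nzsmul (K L V : Type*) [Field K] [Field L] [Algebra K L]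
    [AddCommGroup V] [Module L V] [Module K V] [IsScalarTower K L V] :
    NoZeroSMulDivisors K V := by
  constructor
  intro a x h
  rw [← algebraMap_smul L a x] at h
  rcases smul_eq_zero.1 h with h | h
  · exact Or.inl ((algebraMap K L).injective (by simpa using h))
  · exact Or.inr h

variable {K L V : Type*} [Field K] [Fintype K] [Field L] [Algebra K L]
    [AddCommGroup V] [Module L V] [Module K V] [IsScalarTower K L V]
    [FiniteDimensional K L] [FiniteDimensional L V]

include L in
lemma cardM (M : Submodule K V) :
    Nat.card {x : V // x ∈ M ∧ x ≠ 0} = Fintype.card K ^ Module.finrank K ↥M - 1 := by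
  haveI : Finite L := Module.finite_of_finite K
  haveI : Finite V := Module.finite_of_finite L
  have e1 : {x : V // x ∈ M ∧ x ≠ 0} ≃ {y : ↥M // y ≠ 0} :=
    { toFun := fun x => ⟨⟨x.1, x.2.1⟩, fun h => x.2.2 (congrArg Subtype.val h)⟩
      invFun := fun y => ⟨(y : ↥M), y.1.2, fun h => y.2 (Subtype.ext h)⟩
      left_inv := fun x => rfl
      right_inv := fun y => rfl }
  rw [Nat.card_congr e1, natCard_ne]
  haveI : Fintype ↥M := Fintype.ofFinite _
  rw [Nat.card_eq_fintype_card, Module.card_eq_pow_finrank (K := K) (V := ↥M)]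

/-- The scattered-ness transfer lemma. -/
lemma scat_of (U W : Submodule K V) (hU : IsHScattered K L V 2 U)
    (hr : 2 ≤ Module.finrank L V) (hWU : linSet K L V W = linSet K L V U) :
    Scat K L V W := by
  classical
  intro w hw hw0 l hlw
  by_contra hl
  push_neg at hl
  haveI : Finite L := Module.finite_of_finite K
  haveI : Finite V := Module.finite_of_finite L
  haveI : NoZeroSMulDivisors K V := nzsmul K L V
  have hspan : Submodule.span L (U : Set V) = ⊤ := hU.1
  -- a vector of U outside the line of w
  obtain ⟨u', hu'U, hu'⟩ : ∃ u' ∈ U, u' ∉ Submodule.span L {w} := by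
    by_contra h
    push_neg at h
    have h1 : Submodule.span L (U : Set V) ≤ Submodule.span L {w} := Submodule.span_le.2 h
    rw [hspan] at h1
    have h2 : Submodule.span L {w} = ⊤ := top_le_iff.1 h1
    have h3 : Module.finrank L (Submodule.span L {w}) = Module.finrank L V := by
      rw [h2, finrank_top]
    rw [finrank_span_singleton hw0] at h3
    omega
  -- a vector of W on the line of u'
  have hP' : Submodule.span L {u'} ∈ linSet K L V U :=
    ⟨u', hu'U, (by rintro rfl; exact hu' (Submodule.zero_mem _)), rfl⟩
  rw [← hWU] at hP'
  obtain ⟨w', hw'W, hw'0, hspanww'⟩ := hP'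
  have hw' : w' ∉ Submodule.span L {w} := by
    intro h
    apply hu'
    have hle : Submodule.span L {w'} ≤ Submodule.span L {w} :=
      Submodule.span_le.2 (by simpa using h)
    exact hle (hspanww' ▸ Submodule.mem_span_singleton_self u')
  -- the plane S
  set S : Submodule L V := Submodule.span L (Set.range ![w, w']) with hSdef
  have hwS : w ∈ S := Submodule.subset_span ⟨0, rfl⟩
  have hw'S : w' ∈ S := Submodule.subset_span ⟨1, rfl⟩
  have hind : LinearIndependent L ![w, w'] := by
    rw [LinearIndependent.pair_iff]
    intro s t hst
    have ht : t = 0 := by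
      by_contra ht
      apply hw'
      rw [Submodule.mem_span_singleton]
      have htw : t • w' = (-s) • w := by
        rw [neg_smul, eq_neg_iff_add_eq_zero, add_comm]
        exact hst
      refine ⟨t⁻¹ * -s, ?_⟩
      rw [mul_smul, ← htw, smul_smul, inv_mul_cancel₀ ht, one_smul]
    refine ⟨?_, ht⟩
    rw [ht, zero_smul, add_zero, smul_eq_zero] at hst
    exact hst.resolve_right hw0
  have hS2 : Module.finrank L S = 2 := by
    rw [hSdef, finrank_span_eq_card hind]
    simp
  set T := U ⊓ S.restrictScalars K with hTdef
  have hT : Module.finrank K ↥T ≤ 2 := hU.2 S hS2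
  -- the vector of U on the line of w
  have hPw : Submodule.span L {w} ∈ linSet K L V U := hWU ▸ ⟨w, hw, hw0, rfl⟩
  obtain ⟨u0, hu0U, hu00, hsp0⟩ := hPw
  have hu0T : u0 ∈ T := by
    refine ⟨hu0U, ?_⟩
    have h1 : u0 ∈ Submodule.span L {w} := hsp0 ▸ Submodule.mem_span_singleton_self u0
    have h2 : Submodule.span L {w} ≤ S := Submodule.span_le.2 (by simpa using hwS)
    exact h2 h1
  -- the q² vectors
  set α : K × K → L := fun p => algebraMap K L p.1 + algebraMap K L p.2 * l with hαdef
  set v : K × K → V := fun p => α p • w + w' with hvdef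
  have hα : ∀ p p' : K × K, α p = α p' → p = p' := by
    rintro ⟨a, b⟩ ⟨a', b'⟩ h
    simp only [hαdef] at h
    have hb : b = b' := by
      by_contra hbb
      apply hl ((b - b')⁻¹ * (a' - a))
      have h2 : algebraMap K L (b - b') * l = algebraMap K L (a' - a) := by
        rw [map_sub, map_sub, sub_mul]
        linear_combination h
      have h3 : algebraMap K L (b - b') ≠ 0 := by
        simp only [ne_eq, map_eq_zero, sub_eq_zero]
        exact hbb
      rw [map_mul, map_inv₀, ← h2, inv_mul_cancel_left₀ h3]
    subst hb
    have ha : algebraMap K L a = algebraMap K L a' := by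
      have := h
      exact add_right_cancel this
    exact Prod.ext ((algebraMap K L).injective ha) rfl
  have hvW : ∀ p, v p ∈ W := by
    rintro ⟨a, b⟩
    have : v (a, b) = a • w + b • (l • w) + w' := by
      simp only [hvdef, hαdef, add_smul, mul_smul, algebraMap_smul]
    rw [this]
    exact W.add_mem (W.add_mem (W.smul_mem _ hw) (W.smul_mem _ hlw)) hw'W
  have hvS : ∀ p, v p ∈ S := fun p => S.add_mem (S.smul_mem _ hwS) hw'S
  have hv0 : ∀ p, v p ≠ 0 := by
    intro p h
    apply hw'
    have h2 : w' = -(α p • w) := by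
      rw [eq_neg_iff_add_eq_zero, add_comm]
      simpa [hvdef] using h
    rw [h2]
    exact neg_mem (Submodule.smul_mem _ _ (Submodule.mem_span_singleton_self w))
  have hvinj : ∀ p p', Submodule.span L {v p} = Submodule.span L {v p'} → p = p' := by
    intro p p' h
    apply hα
    have h1 : v p' ∈ Submodule.span L {v p} := by
      rw [h]; exact Submodule.mem_span_singleton_self _
    obtain ⟨μ, hμ⟩ := Submodule.mem_span_singleton.1 h1
    have hexp : (μ * α p - α p') • w = (1 - μ) • w' := by
      have h2 : μ • (α p • w + w') = α p' • w + w' := by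
        simpa [hvdef] using hμ
      rw [sub_smul, sub_smul, mul_smul, one_smul]
      rw [smul_add] at h2
      linear_combination (norm := module) h2
    have hμ1 : μ = 1 := by
      by_contra hne
      apply hw'
      rw [Submodule.mem_span_singleton]
      refine ⟨(1 - μ)⁻¹ * (μ * α p - α p'), ?_⟩
      rw [mul_smul, hexp, smul_smul, inv_mul_cancel₀ (sub_ne_zero.2 (Ne.symm hne)), one_smul]
    rw [hμ1, one_mul, sub_self, zero_smul, eq_comm] at hexp
    have := smul_eq_zero.1 hexp.symm
    rcases this with h3 | h3
    · exact sub_eq_zero.1 h3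
    · exact absurd h3 hw0
  have hvnw : ∀ p, Submodule.span L {v p} ≠ Submodule.span L {w} := by
    intro p h
    apply hw'
    have h1 : v p ∈ Submodule.span L {w} := by
      rw [← h]; exact Submodule.mem_span_singleton_self _
    have h2 : w' = v p - α p • w := by simp [hvdef]
    rw [h2]
    exact Submodule.sub_mem _ h1 (Submodule.smul_mem _ _ (Submodule.mem_span_singleton_self w))
  -- pick vectors of U on the lines of the v p
  have hexists : ∀ p : K × K, ∃ u, u ∈ U ∧ u ≠ 0 ∧
      Submodule.span L {v p} = Submodule.span L {u} := by
    intro p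
    have h1 : Submodule.span L {v p} ∈ linSet K L V W := ⟨v p, hvW p, hv0 p, rfl⟩
    rw [hWU] at h1
    obtain ⟨u, h2, h3, h4⟩ := h1
    exact ⟨u, h2, h3, h4⟩
  choose uu huuU huu0 huusp using hexists
  have huuT : ∀ p, uu p ∈ T := by
    intro p
    refine ⟨huuU p, ?_⟩
    have h1 : uu p ∈ Submodule.span L {v p} := (huusp p) ▸ Submodule.mem_span_singleton_self _
    have h2 : Submodule.span L {v p} ≤ S := Submodule.span_le.2 (by simpa using hvS p)
    exact h2 h1
  -- the injection
  set ρ : (K × K) ⊕ Unit → V := Sum.elim uu (fun _ => u0) with hρdef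
  have hρT : ∀ x, ρ x ∈ T := by rintro (p | ⟨⟩) <;> [exact huuT p; exact hu0T]
  have hρ0 : ∀ x, ρ x ≠ 0 := by rintro (p | ⟨⟩) <;> [exact huu0 p; exact hu00]
  have hρsp : ∀ x y, Submodule.span L {ρ x} = Submodule.span L {ρ y} → x = y := by
    rintro (p | u) (p' | u') h
    · have h' : Submodule.span L {uu p} = Submodule.span L {uu p'} := h
      exact congrArg Sum.inl (hvinj p p' ((huusp p).trans (h'.trans (huusp p').symm)))
    · have h' : Submodule.span L {uu p} = Submodule.span L {u0} := h
      exact absurd ((huusp p).trans (h'.trans hsp0.symm)) (hvnw p)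
    · have h' : Submodule.span L {u0} = Submodule.span L {uu p'} := h
      exact absurd ((huusp p').trans (h'.symm.trans hsp0.symm)) (hvnw p')
    · exact congrArg Sum.inr (Subsingleton.elim _ _)
  have hunit : ∀ c : Kˣ, IsUnit (algebraMap K L (c : K)) := by
    intro c
    exact isUnit_iff_ne_zero.2 (by simp [c.ne_zero])
  set G : ((K × K) ⊕ Unit) × Kˣ → {t : ↥T // t ≠ 0} := fun pc =>
    ⟨⟨(pc.2 : K) • ρ pc.1, T.smul_mem _ (hρT pc.1)⟩, by
      intro h
      exact smul_ne_zero pc.2.ne_zero (hρ0 pc.1) (congrArg Subtype.val h)⟩ with hGdef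
  have hGinj : Function.Injective G := by
    rintro ⟨x, c⟩ ⟨y, d⟩ h
    have hval : (c : K) • ρ x = (d : K) • ρ y :=
      congrArg Subtype.val (congrArg Subtype.val h)
    have hsp : Submodule.span L {ρ x} = Submodule.span L {ρ y} := by
      have e1 : Submodule.span L {(c : K) • ρ x} = Submodule.span L {ρ x} := by
        rw [← algebraMap_smul L (c : K) (ρ x)]
        exact Submodule.span_singleton_smul_eq (hunit c) _
      have e2 : Submodule.span L {(d : K) • ρ y} = Submodule.span L {ρ y} := by
        rw [← algebraMap_smul L (d : K) (ρ y)]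
        exact Submodule.span_singleton_smul_eq (hunit d) _
      rw [← e1, hval, e2]
    obtain rfl : x = y := hρsp _ _ hsp
    have h1 : ((c : K) - (d : K)) • ρ x = 0 := by rw [sub_smul, hval, sub_self]
    have h2 : (c : K) = (d : K) := by
      rcases smul_eq_zero.1 h1 with h3 | h3
      · exact sub_eq_zero.1 h3
      · exact absurd h3 (hρ0 x)
    exact Prod.ext rfl (Units.ext h2)
  have hle := Nat.card_le_card_of_injective G hGinj
  -- cardinalities
  set q := Fintype.card K with hq
  have hq2 : 2 ≤ q := Fintype.one_lt_card
  have hcard1 : Nat.card (((K × K) ⊕ Unit) × Kˣ) = (q * q + 1) * (q - 1) := by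
    rw [Nat.card_prod, Nat.card_sum, Nat.card_prod, Nat.card_units]
    simp [Nat.card_eq_fintype_card, hq]
  have hcard2 : Nat.card {t : ↥T // t ≠ 0} = q ^ Module.finrank K ↥T - 1 := by
    rw [natCard_ne]
    haveI : Fintype ↥T := Fintype.ofFinite _
    rw [Nat.card_eq_fintype_card, Module.card_eq_pow_finrank (K := K) (V := ↥T)]
  have hpow : q ^ Module.finrank K ↥T ≤ q * q := by
    calc q ^ Module.finrank K ↥T ≤ q ^ 2 := Nat.pow_le_pow_right (by omega) hT
    _ = q * q := by ring
  rw [hcard1, hcard2] at hle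
  have h1 : q * q + 1 ≤ (q * q + 1) * (q - 1) := Nat.le_mul_of_pos_right _ (by omega)
  omega

/-- The counting injection. -/
lemma card_le_of_scat (M N : Submodule K V) (hM : Scat K L V M)
    (hsub : linSet K L V M ⊆ linSet K L V N) :
    Nat.card {x : V // x ∈ M ∧ x ≠ 0} ≤ Nat.card {x : V // x ∈ N ∧ x ≠ 0} := by
  classical
  haveI : Finite L := Module.finite_of_finite K
  haveI : Finite V := Module.finite_of_finite L
  haveI : NoZeroSMulDivisors K V := nzsmul K L V
  have hm : ∀ P : {P : Submodule L V // P ∈ linSet K L V M},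
      ∃ m, m ∈ M ∧ m ≠ 0 ∧ (P : Submodule L V) = Submodule.span L {m} := by
    rintro ⟨P, u, h1, h2, h3⟩
    exact ⟨u, h1, h2, h3⟩
  choose mm hm1 hm2 hm3 using hm
  have hn : ∀ P : {P : Submodule L V // P ∈ linSet K L V M},
      ∃ x, x ∈ N ∧ x ≠ 0 ∧ (P : Submodule L V) = Submodule.span L {x} := by
    rintro ⟨P, hP⟩
    obtain ⟨u, h1, h2, h3⟩ := hsub hP
    exact ⟨u, h1, h2, h3⟩
  choose nn hn1 hn2 hn3 using hn
  set Pt : {x : V // x ∈ M ∧ x ≠ 0} → {P : Submodule L V // P ∈ linSet K L V M} :=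
    fun x => ⟨Submodule.span L {(x : V)}, ⟨x, x.2.1, x.2.2, rfl⟩⟩ with hPtdef
  have hc : ∀ x : {x : V // x ∈ M ∧ x ≠ 0}, ∃ c : K, c ≠ 0 ∧ (x : V) = algebraMap K L c • mm (Pt x) := by
    intro x
    have hx : (x : V) ∈ Submodule.span L {mm (Pt x)} := by
      rw [← hm3 (Pt x)]
      exact Submodule.mem_span_singleton_self _
    obtain ⟨μ, hμ⟩ := Submodule.mem_span_singleton.1 hx
    have hμM : μ • mm (Pt x) ∈ M := by rw [hμ]; exact x.2.1
    obtain ⟨c, hcc⟩ := hM (mm (Pt x)) (hm1 _) (hm2 _) μ hμM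
    refine ⟨c, ?_, ?_⟩
    · rintro rfl
      apply x.2.2
      rw [← hμ, hcc, map_zero, zero_smul]
    · rw [← hcc, hμ]
  choose c hc0 hcx using hc
  set f : {x : V // x ∈ M ∧ x ≠ 0} → {x : V // x ∈ N ∧ x ≠ 0} := fun x =>
    ⟨c x • nn (Pt x), N.smul_mem _ (hn1 _), smul_ne_zero (hc0 x) (hn2 _)⟩ with hfdef
  apply Nat.card_le_card_of_injective f
  intro x y hxy
  have hval : c x • nn (Pt x) = c y • nn (Pt y) := congrArg Subtype.val hxy
  have hunit : ∀ a : K, a ≠ 0 → IsUnit (algebraMap K L a) := by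
    intro a ha
    exact isUnit_iff_ne_zero.2 (by simpa using ha)
  have hsp : (Pt x : Submodule L V) = (Pt y : Submodule L V) := by
    rw [hn3 (Pt x), hn3 (Pt y)]
    have e1 : Submodule.span L {c x • nn (Pt x)} = Submodule.span L {nn (Pt x)} := by
      rw [← algebraMap_smul L (c x)]
      exact Submodule.span_singleton_smul_eq (hunit _ (hc0 x)) _
    have e2 : Submodule.span L {c y • nn (Pt y)} = Submodule.span L {nn (Pt y)} := by
      rw [← algebraMap_smul L (c y)]
      exact Submodule.span_singleton_smul_eq (hunit _ (hc0 y)) _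
    rw [← e1, hval, e2]
  have hPt : Pt x = Pt y := Subtype.ext hsp
  have hcc : c x = c y := by
    rw [hPt] at hval
    have h1 : (c x - c y) • nn (Pt y) = 0 := by rw [sub_smul, hval, sub_self]
    rcases smul_eq_zero.1 h1 with h2 | h2
    · exact sub_eq_zero.1 h2
    · exact absurd h2 (hn2 _)
  apply Subtype.ext
  rw [hcx x, hcx y, hPt, hcc]

end Aux

theorem stmt11 (n r : ℕ) (K L V : Type*) [Field K] [Fintype K] [Field L] [Algebra K L]
    [AddCommGroup V] [Module L V] [Module K V] [IsScalarTower K L V]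
    [FiniteDimensional K L] [FiniteDimensional L V]
    (hn : Module.finrank K L = n) (hr : Module.finrank L V = r) (hr3 : 3 ≤ r)
    (U : Submodule K V) (hU : IsHScattered K L V 2 U) :
    ∀ W : Submodule K V, linSet K L V W = linSet K L V U →
      Module.finrank K ↥W = Module.finrank K ↥U := by
  intro W hWU
  have hr2 : 2 ≤ Module.finrank L V := by rw [hr]; omega
  have hWscat : Scat K L V W := scat_of U W hU hr2 hWU
  have hUscat : Scat K L V U := scat_of U U hU hr2 rfl
  have h1 := card_le_of_scat W U hWscat (subset_of_eq hWU)
  have h2 := card_le_of_scat U W hUscat (subset_of_eq hWU.symm)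
  have hcards := le_antisymm h1 h2
  rw [cardM (L := L), cardM (L := L)] at hcards
  set q := Fintype.card K with hq
  have hq2 : 2 ≤ q := Fintype.one_lt_card
  have hp1 : 1 ≤ q ^ Module.finrank K ↥W := Nat.one_le_pow _ _ (by omega)
  have hp2 : 1 ≤ q ^ Module.finrank K ↥U := Nat.one_le_pow _ _ (by omega)
  have heq : q ^ Module.finrank K ↥W = q ^ Module.finrank K ↥U := by omega
  exact Nat.pow_right_injective hq2 heq
end

section
/- Let V be an r-dimensional L-vector space with r ≥ 3 and let U be a 2-scattered K-subspace of V. If W is a K-subspace of V with L_U = L_W, then there exists a nonzero scalar λ ∈ L such that U = λ·W = {λ·w : w ∈ W}. -/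
open Module Submodule Set

section DivisionRing

variable {R M : Type*} [DivisionRing R] [AddCommGroup M] [Module R M]

theorem exists_mem_notMem_span_singleton {s : Set M} (hs : span R s = ⊤)
    (hM : 1 < finrank R M) (x : M) : ∃ y ∈ s, y ∉ R ∙ x := by
  by_contra! h
  have hle : (⊤ : Submodule R M) ≤ R ∙ x := hs ▸ span_le.2 h
  have := finrank_le_one x fun w => mem_span_singleton.1 (hle mem_top)
  omega

theorem linearIndependent_pair_of_notMem_span_singleton {x y : M} (hx : x ≠ 0)
    (hy : y ∉ R ∙ x) : LinearIndependent R ![x, y] :=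
  (LinearIndependent.pair_iff' hx).2 fun a ha => hy (mem_span_singleton.2 ⟨a, ha⟩)

end DivisionRing

section Scattered

variable {K L V : Type*} [Field K] [Field L] [Algebra K L]
  [AddCommGroup V] [Module L V] [Module K V] [IsScalarTower K L V]

theorem exists_smul_mem_of_linSet_subset {U W : Submodule K V}
    (h : linSet K L V U ⊆ linSet K L V W) {u : V} (hu : u ∈ U) (hu0 : u ≠ 0) :
    ∃ c : L, c ≠ 0 ∧ c • u ∈ W := by
  obtain ⟨w, hw, -, hspan⟩ := h ⟨u, hu, hu0, rfl⟩
  obtain ⟨c, rfl⟩ := span_singleton_eq_span_singleton.1 hspan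
  exact ⟨c, c.ne_zero, hw⟩

namespace IsHScattered

variable [FiniteDimensional K V] {U W : Submodule K V}

theorem inf_span_eq_span {h : ℕ} (hU : IsHScattered K L V h U) {a : Fin h → V}
    (ha : ∀ i, a i ∈ U) (hli : LinearIndependent L a) :
    U ⊓ (span L (range a)).restrictScalars K = span K (range a) := by
  have hle : span K (range a) ≤ U ⊓ (span L (range a)).restrictScalars K :=
    span_le.2 (range_subset_iff.2 fun i => ⟨ha i, subset_span ⟨i, rfl⟩⟩)
  refine (eq_of_le_of_finrank_le hle ?_).symm
  rw [finrank_span_eq_card (hli.restrict_scalars' K), Fintype.card_fin]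
  exact hU.2 _ (by rw [finrank_span_eq_card hli, Fintype.card_fin])

theorem exists_algebraMap_eq_of_smul_add_smul_mem (hU : IsHScattered K L V 2 U) {a b : V}
    (ha : a ∈ U) (hb : b ∈ U) (hab : LinearIndependent L ![a, b]) {α β : L}
    (h : α • a + β • b ∈ U) : ∃ s t : K, algebraMap K L s = α ∧ algebraMap K L t = β := by
  have hmem : α • a + β • b ∈ span K (range ![a, b]) := by
    rw [← hU.inf_span_eq_span (Fin.forall_fin_two.2 ⟨ha, hb⟩) hab]
    exact ⟨h, add_mem (smul_mem _ _ (subset_span (mem_range_self 0)))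
      (smul_mem _ _ (subset_span (mem_range_self 1)))⟩
  obtain ⟨f, hf⟩ := (mem_span_range_iff_exists_fun K).1 hmem
  rw [Fin.sum_univ_two, Matrix.cons_val_zero, Matrix.cons_val_one, Matrix.cons_val_zero,
    ← algebraMap_smul L (f 0), ← algebraMap_smul L (f 1)] at hf
  obtain ⟨hs, ht⟩ := LinearIndependent.pair_iff.1 hab (algebraMap K L (f 0) - α)
    (algebraMap K L (f 1) - β) (by rw [sub_smul, sub_smul, sub_add_sub_comm, hf, sub_self])
  exact ⟨f 0, f 1, sub_eq_zero.1 hs, sub_eq_zero.1 ht⟩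

theorem exists_eq_algebraMap_mul_of_smul_mem (hU : IsHScattered K L V 2 U)
    (hWU : linSet K L V W ⊆ linSet K L V U) {a b : V} (ha : a ∈ U) (hb : b ∈ U)
    (hab : LinearIndependent L ![a, b]) {μ ν : L} (hμ : μ • a ∈ W) (hν : ν • b ∈ W)
    (hν0 : ν ≠ 0) : ∃ k : K, μ = algebraMap K L k * ν := by
  have hsum0 : μ • a + ν • b ≠ 0 := fun h0 => hν0 (LinearIndependent.pair_iff.1 hab μ ν h0).2
  obtain ⟨c, hc0, hc⟩ := exists_smul_mem_of_linSet_subset hWU (add_mem hμ hν) hsum0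
  rw [smul_add, smul_smul, smul_smul] at hc
  obtain ⟨s, t, hs, ht⟩ := hU.exists_algebraMap_eq_of_smul_add_smul_mem ha hb hab hc
  refine ⟨s / t, ?_⟩
  rw [map_div₀, hs, ht]
  field_simp

theorem exists_eq_algebraMap_mul_of_linSet_eq (hU : IsHScattered K L V 2 U)
    (hV : 1 < finrank L V) (hUW : linSet K L V U = linSet K L V W) {u v : V}
    (hu : u ∈ U) (hv : v ∈ U) (hu0 : u ≠ 0) (hv0 : v ≠ 0) {μ ν : L} (hμ : μ • u ∈ W)
    (hν : ν • v ∈ W) (hν0 : ν ≠ 0) : ∃ k : K, μ = algebraMap K L k * ν := by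
  by_cases huv : v ∈ L ∙ u
  · obtain ⟨x, hxU, hxu⟩ := exists_mem_notMem_span_singleton hU.1 hV u
    have hx0 : x ≠ 0 := fun h0 => hxu (h0 ▸ zero_mem _)
    have hxv : x ∉ L ∙ v := fun h => hxu (span_singleton_le_iff_mem _ _ |>.2 huv h)
    obtain ⟨ξ, hξ0, hξ⟩ := exists_smul_mem_of_linSet_subset hUW.le hxU hx0
    obtain ⟨k, rfl⟩ := hU.exists_eq_algebraMap_mul_of_smul_mem hUW.ge hu hxU
      (linearIndependent_pair_of_notMem_span_singleton hu0 hxu) hμ hξ hξ0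
    have hvx := linearIndependent_pair_of_notMem_span_singleton hv0 hxv
    obtain ⟨k', rfl⟩ := hU.exists_eq_algebraMap_mul_of_smul_mem hUW.ge hxU hv
      (LinearIndependent.pair_symm_iff.1 hvx) hξ hν hν0
    exact ⟨k * k', by rw [map_mul, mul_assoc]⟩
  · exact hU.exists_eq_algebraMap_mul_of_smul_mem hUW.ge hu hv
      (linearIndependent_pair_of_notMem_span_singleton hu0 huv) hμ hν hν0

theorem mem_iff_smul_mem_of_linSet_eq (hU : IsHScattered K L V 2 U)
    (hV : 1 < finrank L V) (hUW : linSet K L V U = linSet K L V W) {u₀ : V} (hu₀ : u₀ ∈ U)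
    (hu₀0 : u₀ ≠ 0) {c : L} (hc0 : c ≠ 0) (hc : c • u₀ ∈ W) (x : V) : x ∈ U ↔ c • x ∈ W := by
  rcases eq_or_ne x 0 with rfl | hx0
  · simp
  constructor
  · intro hx
    obtain ⟨μ, hμ0, hμ⟩ := exists_smul_mem_of_linSet_subset hUW.le hx hx0
    obtain ⟨k, rfl⟩ := hU.exists_eq_algebraMap_mul_of_linSet_eq hV hUW hx hu₀ hx0 hu₀0 hμ hc hc0
    have hk : algebraMap K L k ≠ 0 := left_ne_zero_of_mul hμ0
    convert W.smul_mem k⁻¹ hμ using 1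
    rw [← algebraMap_smul L k⁻¹, smul_smul, map_inv₀, inv_mul_cancel_left₀ hk]
  · -- `d • c • x ∈ U` has the multiplier `d⁻¹` into `W`, so `d⁻¹ = k * c` and `x = k • d • c • x`.
    intro hx
    obtain ⟨d, hd0, hd⟩ := exists_smul_mem_of_linSet_subset hUW.ge hx (smul_ne_zero hc0 hx0)
    have hdc : d⁻¹ • d • c • x ∈ W := by rwa [inv_smul_smul₀ hd0]
    obtain ⟨k, hk⟩ := hU.exists_eq_algebraMap_mul_of_linSet_eq hV hUW hd hu₀
      (smul_ne_zero hd0 (smul_ne_zero hc0 hx0)) hu₀0 hdc hc hc0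
    convert U.smul_mem k hd using 1
    rw [← algebraMap_smul L k, smul_smul, smul_smul, mul_right_comm, ← hk,
      inv_mul_cancel₀ hd0, one_smul]

end IsHScattered

end Scattered

theorem stmt12_general (r : ℕ) (K L V : Type*) [Field K] [Field L] [Algebra K L]
    [AddCommGroup V] [Module L V] [Module K V] [IsScalarTower K L V]
    [FiniteDimensional K L] [FiniteDimensional L V]
    (hr : Module.finrank L V = r) (hr3 : 3 ≤ r)
    (U : Submodule K V) (hU : IsHScattered K L V 2 U)
    (W : Submodule K V) (hUW : linSet K L V U = linSet K L V W) :
    ∃ l : L, l ≠ 0 ∧ (U : Set V) = (fun w => l • w) '' (W : Set V) := by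
  have : FiniteDimensional K V := .trans K L V
  have hV : 1 < finrank L V := by omega
  obtain ⟨u₀, hu₀, hu₀0⟩ := exists_mem_notMem_span_singleton hU.1 hV (0 : V)
  rw [span_zero_singleton, mem_bot] at hu₀0
  obtain ⟨c, hc0, hc⟩ := exists_smul_mem_of_linSet_subset hUW.le hu₀ hu₀0
  have hmem := hU.mem_iff_smul_mem_of_linSet_eq hV hUW hu₀ hu₀0 hc0 hc
  refine ⟨c⁻¹, inv_ne_zero hc0, Set.ext fun x => ⟨fun hx => ?_, ?_⟩⟩
  · exact ⟨c • x, (hmem x).1 hx, inv_smul_smul₀ hc0 x⟩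
  · rintro ⟨w, hw, rfl⟩
    exact (hmem _).2 (by rwa [smul_inv_smul₀ hc0])

theorem stmt12 (n r : ℕ) (K L V : Type*) [Field K] [Fintype K] [Field L] [Algebra K L]
    [AddCommGroup V] [Module L V] [Module K V] [IsScalarTower K L V]
    [FiniteDimensional K L] [FiniteDimensional L V]
    (hn : Module.finrank K L = n) (hr : Module.finrank L V = r) (hr3 : 3 ≤ r)
    (U : Submodule K V) (hU : IsHScattered K L V 2 U)
    (W : Submodule K V) (hUW : linSet K L V U = linSet K L V W) :
    ∃ l : L, l ≠ 0 ∧ (U : Set V) = (fun w => l • w) '' (W : Set V) :=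
  stmt12_general r K L V hr hr3 U hU W hUW
end

section
/- Let V be an r-dimensional L-vector space and let U and W be h-scattered K-subspaces of V with h ≥ 2. Then the following are equivalent: (i) there exist a field automorphism σ of L and a bijective σ-semilinear map f : V → V such that {L·f(u) : u ∈ U, u ≠ 0} = {L·w : w ∈ W, w ≠ 0} (i.e., the linear sets L_U and L_W are PΓL-equivalent); (ii) there exist a field automorphism τ of L and a bijective τ-semilinear map g : V → V such that g(U) = W (i.e., U and W are ΓL-equivalent). -/
open Module Submodule

set_option linter.unusedSectionVars false
set_option linter.unusedVariables false
set_option maxHeartbeats 1000000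

lemma sigma_range {K L : Type*} [Field K] [Fintype K] [Field L] [Algebra K L]
    (σ : L ≃+* L) (x : L) (hx : x ∈ Set.range (algebraMap K L)) :
    σ x ∈ Set.range (algebraMap K L) := by
  classical
  set q := Fintype.card K with hq
  have hq1 : 1 < q := Fintype.one_lt_card
  have hroot : ∀ y : L, y ∈ Set.range (algebraMap K L) → y ^ q = y := by
    rintro _ ⟨k, rfl⟩; rw [← map_pow, FiniteField.pow_card]
  set p : Polynomial L := Polynomial.X ^ q - Polynomial.X with hp
  have hp0 : p ≠ 0 := FiniteField.X_pow_card_sub_X_ne_zero L hq1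
  have hdeg : p.natDegree = q := FiniteField.X_pow_card_sub_X_natDegree_eq L hq1
  set R : Finset L := p.roots.toFinset with hR
  have hmem : ∀ y : L, y ^ q = y → y ∈ R := by
    intro y hy
    rw [hR, Multiset.mem_toFinset, Polynomial.mem_roots hp0]
    simp [Polynomial.IsRoot, hp, hy]
  set Im : Finset L := Finset.univ.image (algebraMap K L) with hIm
  have hsub : Im ⊆ R := by
    intro y hy
    rw [hIm, Finset.mem_image] at hy; obtain ⟨k, -, rfl⟩ := hy
    exact hmem _ (hroot _ ⟨k, rfl⟩)
  have hcardIm : Im.card = q := by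
    rw [hIm, Finset.card_image_of_injective _ (algebraMap K L).injective, Finset.card_univ]
  have hcardR : R.card ≤ q := by
    calc R.card ≤ Multiset.card p.roots := p.roots.toFinset_card_le
      _ ≤ p.natDegree := p.card_roots'
      _ = q := hdeg
  have hIR : Im = R := Finset.eq_of_subset_of_card_le hsub (by omega)
  obtain ⟨k, rfl⟩ := hx
  have h1 : σ (algebraMap K L k) ^ q = σ (algebraMap K L k) := by
    rw [← map_pow, ← map_pow, FiniteField.pow_card]
  have h2 : σ (algebraMap K L k) ∈ R := hmem _ h1
  rw [← hIR, Finset.mem_image] at h2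
  obtain ⟨k', -, hk'⟩ := h2
  exact ⟨k', hk'⟩

lemma finrank_eq_of_card_eq (F : Type*) [Field F] {M N : Type*}
    [AddCommGroup M] [AddCommGroup N] [Module F M] [Module F N]
    [Finite F] [Finite M] [Finite N] (hc : Nat.card M = Nat.card N) :
    Module.finrank F M = Module.finrank F N := by
  cases nonempty_fintype F
  cases nonempty_fintype M
  cases nonempty_fintype N
  haveI : Module.Finite F M := (Module.finite_iff_finite (R := F) (M := M)).mpr inferInstance
  haveI : Module.Finite F N := (Module.finite_iff_finite (R := F) (M := N)).mpr inferInstance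
  rw [Nat.card_eq_fintype_card, Nat.card_eq_fintype_card,
    card_eq_pow_finrank (K := F) (V := M), card_eq_pow_finrank (K := F) (V := N)] at hc
  exact Nat.pow_right_injective Fintype.one_lt_card hc

section Main

variable {K L V : Type*} [Field K] [Fintype K] [Field L] [Algebra K L]
  [AddCommGroup V] [Module L V] [Module K V] [IsScalarTower K L V]
  [FiniteDimensional K L] [FiniteDimensional L V]

lemma descent {h : ℕ} {U : Submodule K V} (hU : IsHScattered K L V h U)
    (hrV : h < Module.finrank L V) (k : ℕ) :
    ∀ S : Submodule L V, Module.finrank L S = h - k →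
      Module.finrank K ↥(U ⊓ S.restrictScalars K) ≤ h - k := by
  haveI : FiniteDimensional K V := Module.Finite.trans L V
  induction k with
  | zero => simpa using hU.2
  | succ k ih =>
    intro S hS
    by_cases hk : h ≤ k
    · have he : h - (k+1) = h - k := by omega
      rw [he] at hS ⊢
      exact ih S hS
    · push_neg at hk
      have hSne : S ≠ ⊤ := by
        intro hTop
        rw [hTop, finrank_top] at hS
        omega
      obtain ⟨u, huU, huS⟩ : ∃ u ∈ U, u ∉ S := by
        by_contra hc
        push_neg at hc
        exact hSne (top_le_iff.mp (hU.1 ▸ Submodule.span_le.mpr hc))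
      have hu0 : u ≠ 0 := fun h0 => huS (h0 ▸ S.zero_mem)
      set T := S ⊔ Submodule.span L {u} with hT
      have hinfL : S ⊓ Submodule.span L {u} = ⊥ := by
        rw [eq_bot_iff]
        intro x hx
        rw [Submodule.mem_inf, Submodule.mem_span_singleton] at hx
        obtain ⟨hxS, hxu⟩ := hx
        obtain ⟨a, rfl⟩ := hxu
        rcases eq_or_ne a 0 with rfl | ha
        · simp
        · exact absurd (by simpa [smul_smul, inv_mul_cancel₀ ha] using S.smul_mem a⁻¹ hxS) huS
      have hrankT : Module.finrank L T = h - k := by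
        have h2 := Submodule.finrank_sup_add_finrank_inf_eq S (Submodule.span L {u})
        rw [hinfL, finrank_bot, hS, finrank_span_singleton hu0, ← hT] at h2
        omega
      have hle : (U ⊓ S.restrictScalars K) ⊔ Submodule.span K {u} ≤ U ⊓ T.restrictScalars K := by
        refine sup_le (le_inf inf_le_left ?_) (le_inf ?_ ?_)
        · exact le_trans inf_le_right (fun x hx => le_sup_left (α := Submodule L V) hx)
        · exact Submodule.span_le.mpr (by simpa using huU)
        · exact Submodule.span_le.mpr (Set.singleton_subset_iff.mpr
            (le_sup_right (α := Submodule L V) (Submodule.mem_span_singleton_self u)))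
      have hinfK : (U ⊓ S.restrictScalars K) ⊓ Submodule.span K {u} = ⊥ := by
        rw [eq_bot_iff]
        intro x hx
        rw [Submodule.mem_inf, Submodule.mem_inf, Submodule.mem_span_singleton] at hx
        obtain ⟨⟨-, hxS⟩, c, rfl⟩ := hx
        rcases eq_or_ne c 0 with rfl | hc
        · simp
        · exact absurd (by simpa [smul_smul, inv_mul_cancel₀ hc]
            using (S.restrictScalars K).smul_mem c⁻¹ hxS) huS
      have hsum := Submodule.finrank_sup_add_finrank_inf_eq
        (U ⊓ S.restrictScalars K) (Submodule.span K {u})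
      rw [hinfK, finrank_bot, finrank_span_singleton hu0] at hsum
      have hmono : Module.finrank K ↥((U ⊓ S.restrictScalars K) ⊔ Submodule.span K {u}) ≤
          Module.finrank K ↥(U ⊓ T.restrictScalars K) := Submodule.finrank_mono hle
      have hT2 := ih T hrankT
      omega

lemma indep_of_not_mem_span {u v : V} (hu0 : u ≠ 0) (hvu : v ∉ Submodule.span L {u}) :
    ∀ a b : L, a • u + b • v = 0 → a = 0 ∧ b = 0 := by
  intro a b hab
  have hb : b = 0 := by
    by_contra hb
    apply hvu
    rw [Submodule.mem_span_singleton]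
    have h1 : b • v = -(a • u) := eq_neg_of_add_eq_zero_right hab
    refine ⟨-(b⁻¹ * a), ?_⟩
    rw [neg_smul, mul_smul, ← smul_neg, ← h1, inv_smul_smul₀ hb]
  subst hb
  rw [zero_smul, add_zero] at hab
  exact ⟨(smul_eq_zero.mp hab).resolve_right hu0, rfl⟩

lemma step {W : Submodule K V}
    (hW2 : ∀ S : Submodule L V, Module.finrank L S = 2 →
      Module.finrank K ↥(W ⊓ S.restrictScalars K) ≤ 2)
    {A : Set V} (hadd : ∀ x ∈ A, ∀ y ∈ A, x + y ∈ A)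
    (hAW : ∀ a ∈ A, a ≠ 0 → ∃ lam : L, lam ≠ 0 ∧ lam • a ∈ W)
    {u v : V} (hu : u ∈ A) (hv : v ∈ A) (hu0 : u ≠ 0) (hvu : v ∉ Submodule.span L {u})
    {μ : L} (hμ : μ ≠ 0) (hμu : μ • u ∈ W) : μ • v ∈ W := by
  haveI : FiniteDimensional K V := Module.Finite.trans L V
  have hv0 : v ≠ 0 := fun h => hvu (h ▸ Submodule.zero_mem _)
  have hind := indep_of_not_mem_span (L := L) hu0 hvu
  have huv0 : u + v ≠ 0 := by
    intro h0
    exact hvu (Submodule.mem_span_singleton.mpr ⟨-1, by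
      rw [neg_smul, one_smul]; exact neg_eq_of_add_eq_zero_right h0⟩)
  obtain ⟨lv, hlv0, hlvW⟩ := hAW v hv hv0
  obtain ⟨l3, hl30, hl3W⟩ := hAW (u + v) (hadd u hu v hv) huv0
  have hS2 : Module.finrank L (Submodule.span L {u, v}) = 2 := by
    have hsup : Submodule.span L {u, v} = Submodule.span L {u} ⊔ Submodule.span L {v} :=
      Submodule.span_insert u {v}
    have hinf : Submodule.span L {u} ⊓ Submodule.span L {v} = ⊥ := by
      rw [eq_bot_iff]
      intro x hx
      rw [Submodule.mem_inf, Submodule.mem_span_singleton, Submodule.mem_span_singleton] at hx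
      obtain ⟨⟨a, ha⟩, b, hb⟩ := hx
      have h := hind a (-b) (by rw [neg_smul, ha, hb]; simp)
      simp [← ha, h.1]
    have h2 := Submodule.finrank_sup_add_finrank_inf_eq
      (Submodule.span L {u}) (Submodule.span L {v})
    rw [hinf, finrank_bot, finrank_span_singleton hu0, finrank_span_singleton hv0, ← hsup] at h2
    omega
  set S := Submodule.span L ({u, v} : Set V) with hSdef
  have huS : u ∈ S := Submodule.subset_span (by simp)
  have hvS : v ∈ S := Submodule.subset_span (by simp)
  set M := Submodule.span K ({μ • u, lv • v} : Set V) with hMdef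
  have hMle : M ≤ W ⊓ S.restrictScalars K := by
    rw [hMdef, Submodule.span_le]
    rintro x hx
    rcases hx with rfl | hx
    · exact ⟨hμu, S.smul_mem μ huS⟩
    · rcases hx with rfl
      exact ⟨hlvW, S.smul_mem lv hvS⟩
  have hMrank : Module.finrank K ↥M = 2 := by
    have hli : LinearIndependent K ![μ • u, lv • v] := by
      rw [LinearIndependent.pair_iff]
      intro s t hst
      have h1 : (algebraMap K L s * μ) • u + (algebraMap K L t * lv) • v = 0 := by
        rw [mul_smul, mul_smul, algebraMap_smul, algebraMap_smul]
        exact hst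
      obtain ⟨h2, h3⟩ := hind _ _ h1
      constructor
      · have h4 := (mul_eq_zero.mp h2).resolve_right hμ
        exact (algebraMap K L).injective (by rw [h4, map_zero])
      · have h4 := (mul_eq_zero.mp h3).resolve_right hlv0
        exact (algebraMap K L).injective (by rw [h4, map_zero])
    have hrange : ({μ • u, lv • v} : Set V) = Set.range ![μ • u, lv • v] := by
      simp [Matrix.range_cons, Matrix.range_empty, Set.pair_comm]
    rw [hMdef, hrange, finrank_span_eq_card hli, Fintype.card_fin]
  have heq : M = W ⊓ S.restrictScalars K :=
    Submodule.eq_of_le_of_finrank_le hMle (by rw [hMrank]; exact hW2 S hS2)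
  have hl3M : l3 • (u + v) ∈ M := by
    rw [heq]
    exact ⟨hl3W, S.smul_mem l3 (S.add_mem huS hvS)⟩
  rw [hMdef, Submodule.mem_span_pair] at hl3M
  obtain ⟨a, b, hab⟩ := hl3M
  have hab' : (algebraMap K L a * μ) • u + (algebraMap K L b * lv) • v = l3 • u + l3 • v := by
    rw [mul_smul, mul_smul, algebraMap_smul, algebraMap_smul, ← smul_add]
    exact hab
  have hz : (algebraMap K L a * μ - l3) • u + (algebraMap K L b * lv - l3) • v = 0 := by
    rw [sub_smul, sub_smul,
      show ∀ p q r s : V, p - r + (q - s) = p + q - (r + s) from fun p q r s => by abel,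
      hab', sub_self]
  obtain ⟨h1, h2⟩ := hind _ _ hz
  have e1 : algebraMap K L a * μ = l3 := sub_eq_zero.mp h1
  have e2 : algebraMap K L b * lv = l3 := sub_eq_zero.mp h2
  have ha0 : algebraMap K L a ≠ 0 := by
    intro hzz
    rw [hzz, zero_mul] at e1
    exact hl30 e1.symm
  have key : (a⁻¹ * b) • (lv • v) = μ • v := by
    rw [← algebraMap_smul L (a⁻¹ * b) (lv • v), smul_smul, map_mul, map_inv₀]
    congr 1
    field_simp
    linear_combination e2 - e1
  have hmem := W.smul_mem (a⁻¹ * b) hlvW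
  rwa [key] at hmem

lemma onesided {W : Submodule K V}
    (hW2 : ∀ S : Submodule L V, Module.finrank L S = 2 →
      Module.finrank K ↥(W ⊓ S.restrictScalars K) ≤ 2)
    {A : Set V} (hadd : ∀ x ∈ A, ∀ y ∈ A, x + y ∈ A)
    (hspan : Submodule.span L A = ⊤) (hrV : 2 ≤ Module.finrank L V)
    (hAW : ∀ a ∈ A, a ≠ 0 → ∃ lam : L, lam ≠ 0 ∧ lam • a ∈ W) :
    ∃ μ : L, μ ≠ 0 ∧ ∀ a ∈ A, μ • a ∈ W := by
  obtain ⟨u₀, hu₀A, hu₀0⟩ : ∃ x ∈ A, x ≠ 0 := by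
    by_contra hc
    push_neg at hc
    have h1 : A ⊆ ({0} : Set V) := fun x hx => hc x hx
    have h2 : Submodule.span L A ≤ Submodule.span L {0} := Submodule.span_mono h1
    rw [hspan, Submodule.span_zero_singleton] at h2
    have h3 : (⊤ : Submodule L V) = ⊥ := le_bot_iff.mp h2
    have h4 : Module.finrank L V = 0 := by
      rw [← finrank_top L V, h3, finrank_bot]
    omega
  obtain ⟨μ, hμ0, hμW⟩ := hAW u₀ hu₀A hu₀0
  obtain ⟨w, hwA, hwu₀⟩ : ∃ w ∈ A, w ∉ Submodule.span L {u₀} := by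
    by_contra hc
    push_neg at hc
    have h2 : (⊤ : Submodule L V) ≤ Submodule.span L {u₀} := by
      rw [← hspan]
      exact Submodule.span_le.mpr hc
    have h3 : Module.finrank L V ≤ 1 := by
      have h4 : Submodule.span L ({u₀} : Set V) = ⊤ := top_le_iff.mp h2
      rw [← finrank_top L V, ← h4, finrank_span_singleton hu₀0]
    omega
  refine ⟨μ, hμ0, fun a haA => ?_⟩
  rcases eq_or_ne a 0 with rfl | ha0
  · simp only [smul_zero]
    exact W.zero_mem
  by_cases haspan : a ∈ Submodule.span L {u₀}
  · have hw0 : w ≠ 0 := fun h => hwu₀ (h ▸ Submodule.zero_mem _)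
    have hμw : μ • w ∈ W := step hW2 hadd hAW hu₀A hwA hu₀0 hwu₀ hμ0 hμW
    have haw : a ∉ Submodule.span L {w} := by
      intro haw
      apply hwu₀
      rw [Submodule.mem_span_singleton] at haspan haw ⊢
      obtain ⟨c, rfl⟩ := haspan
      obtain ⟨d, hd⟩ := haw
      have hd0 : d ≠ 0 := fun h => ha0 (by rw [← hd, h, zero_smul])
      exact ⟨d⁻¹ * c, by rw [mul_smul, ← hd, inv_smul_smul₀ hd0]⟩
    exact step hW2 hadd hAW hwA haA hw0 haw hμ0 hμw
  · exact step hW2 hadd hAW hu₀A haA hu₀0 haspan hμ0 hμW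

end Main

theorem stmt13 (n r h : ℕ) (K L V : Type*) [Field K] [Fintype K] [Field L] [Algebra K L]
    [AddCommGroup V] [Module L V] [Module K V] [IsScalarTower K L V]
    [FiniteDimensional K L] [FiniteDimensional L V]
    (hn : Module.finrank K L = n) (hr : Module.finrank L V = r)
    (hh2 : 2 ≤ h) (hhr : h ≤ r - 1)
    (U W : Submodule K V)
    (hU : IsHScattered K L V h U) (hW : IsHScattered K L V h W) :
    (∃ (σ : L ≃+* L) (f : V → V), Function.Bijective f ∧
        (∀ x y : V, f (x + y) = f x + f y) ∧
        (∀ (a : L) (x : V), f (a • x) = σ a • f x) ∧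
        {P : Submodule L V | ∃ u ∈ U, u ≠ 0 ∧ P = Submodule.span L {f u}} =
          linSet K L V W) ↔
      (∃ (τ : L ≃+* L) (g : V → V), Function.Bijective g ∧
        (∀ x y : V, g (x + y) = g x + g y) ∧
        (∀ (a : L) (x : V), g (a • x) = τ a • g x) ∧
        g '' (U : Set V) = (W : Set V)) := by
  haveI : FiniteDimensional K V := Module.Finite.trans L V
  haveI : Finite L := Module.finite_of_finite K
  haveI : Finite V := Module.finite_of_finite L
  have hr3 : 3 ≤ Module.finrank L V := by rw [hr]; omega
  have hhlt : h < Module.finrank L V := by rw [hr]; omega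
  constructor
  · rintro ⟨σ, f, hbij, hadd, hsmul, hlin⟩
    have hf0 : f 0 = 0 := by
      have hzz := hadd 0 0
      rw [add_zero] at hzz
      exact add_eq_left.mp hzz.symm
    have hfinj := hbij.1
    have hfne : ∀ x : V, x ≠ 0 → f x ≠ 0 := fun x hx hc => hx (hfinj (hc.trans hf0.symm))
    -- U' = f '' U as a K-submodule
    let U' : Submodule K V :=
      { carrier := f '' (U : Set V)
        add_mem' := by
          rintro x y ⟨x', hx', rfl⟩ ⟨y', hy', rfl⟩
          exact ⟨x' + y', U.add_mem hx' hy', hadd x' y'⟩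
        zero_mem' := ⟨0, U.zero_mem, hf0⟩
        smul_mem' := by
          rintro k x ⟨x', hx', rfl⟩
          obtain ⟨k', hk'⟩ := sigma_range σ.symm (algebraMap K L k) ⟨k, rfl⟩
          refine ⟨k' • x', U.smul_mem k' hx', ?_⟩
          rw [← algebraMap_smul L k' x', hsmul, hk', RingEquiv.apply_symm_apply,
            algebraMap_smul] }
    have hU'c : (U' : Set V) = f '' (U : Set V) := rfl
    have hkey : ∀ x ∈ Submodule.span L (U : Set V),
        f x ∈ Submodule.span L (f '' (U : Set V)) := by
      intro x hx
      induction hx using Submodule.span_induction with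
      | mem y hy => exact Submodule.subset_span ⟨y, hy, rfl⟩
      | zero => rw [hf0]; exact Submodule.zero_mem _
      | add y z _ _ hy hz => rw [hadd]; exact Submodule.add_mem _ hy hz
      | smul a y _ hy => rw [hsmul]; exact Submodule.smul_mem _ _ hy
    have hU'span : Submodule.span L (U' : Set V) = ⊤ := by
      rw [eq_top_iff]
      rintro v -
      obtain ⟨x, rfl⟩ := hbij.2 v
      exact hkey x (by rw [hU.1]; trivial)
    -- preimages of L-subspaces
    have preim : ∀ S : Submodule L V, ∃ S' : Submodule L V,
        (∀ x : V, x ∈ S' ↔ f x ∈ S) ∧ Module.finrank L S' = Module.finrank L S := by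
      intro S
      refine ⟨{ carrier := f ⁻¹' (S : Set V)
                add_mem' := ?_
                zero_mem' := ?_
                smul_mem' := ?_ }, fun x => Iff.rfl, ?_⟩
      · intro x y hx hy
        simp only [Set.mem_preimage, SetLike.mem_coe] at *
        rw [hadd]
        exact S.add_mem hx hy
      · simp only [Set.mem_preimage, SetLike.mem_coe, hf0]
        exact S.zero_mem
      · intro a x hx
        simp only [Set.mem_preimage, SetLike.mem_coe] at *
        rw [hsmul]
        exact S.smul_mem _ hx
      · refine finrank_eq_of_card_eq L (Nat.card_congr
          (Equiv.ofBijective (fun x => (⟨f x.1, x.2⟩ : S)) ⟨?_, ?_⟩))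
        · intro x y hxy
          exact Subtype.ext (hfinj (congrArg Subtype.val hxy))
        · rintro ⟨y, hy⟩
          obtain ⟨x, rfl⟩ := hbij.2 y
          exact ⟨⟨x, hy⟩, rfl⟩
    -- 2-scattered bounds
    have hW2 : ∀ S : Submodule L V, Module.finrank L S = 2 →
        Module.finrank K ↥(W ⊓ S.restrictScalars K) ≤ 2 := by
      intro S hS
      have hd := descent hW hhlt (h - 2) S (by rw [hS]; omega)
      rwa [show h - (h - 2) = 2 by omega] at hd
    have hU2 : ∀ S : Submodule L V, Module.finrank L S = 2 →
        Module.finrank K ↥(U ⊓ S.restrictScalars K) ≤ 2 := by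
      intro S hS
      have hd := descent hU hhlt (h - 2) S (by rw [hS]; omega)
      rwa [show h - (h - 2) = 2 by omega] at hd
    have hU'2 : ∀ S : Submodule L V, Module.finrank L S = 2 →
        Module.finrank K ↥(U' ⊓ S.restrictScalars K) ≤ 2 := by
      intro S hS
      obtain ⟨S', hS'mem, hS'rank⟩ := preim S
      have hcard : Nat.card ↥(U' ⊓ S.restrictScalars K)
          = Nat.card ↥(U ⊓ S'.restrictScalars K) := by
        refine (Nat.card_congr (Equiv.ofBijective
          (fun x : ↥(U ⊓ S'.restrictScalars K) =>
            (⟨f x.1, Submodule.mem_inf.mpr ⟨⟨x.1, x.2.1, rfl⟩,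
              (hS'mem x.1).mp x.2.2⟩⟩ : ↥(U' ⊓ S.restrictScalars K)))
          ⟨fun x y hxy => Subtype.ext (hfinj (congrArg Subtype.val hxy)), ?_⟩)).symm
        rintro ⟨y, hy⟩
        rw [Submodule.mem_inf] at hy
        obtain ⟨⟨x, hxU, rfl⟩, hy2⟩ := hy
        exact ⟨⟨x, Submodule.mem_inf.mpr ⟨hxU, (hS'mem x).mpr hy2⟩⟩, rfl⟩
      have hfr := finrank_eq_of_card_eq K hcard
      rw [hfr]
      exact hU2 S' (by rw [hS'rank, hS])
    -- first application : ∃ μ, μ • U' ⊆ W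
    have hAW1 : ∀ a ∈ (U' : Set V), a ≠ 0 → ∃ lam : L, lam ≠ 0 ∧ lam • a ∈ W := by
      rintro a ⟨x, hxU, rfl⟩ ha0
      have hx0 : x ≠ 0 := fun hc => ha0 (by rw [hc, hf0])
      have hP : Submodule.span L {f x} ∈ linSet K L V W := by
        rw [← hlin]
        exact ⟨x, hxU, hx0, rfl⟩
      obtain ⟨w, hwW, hw0, hPw⟩ := hP
      have hws : w ∈ Submodule.span L ({f x} : Set V) := by
        rw [hPw]
        exact Submodule.mem_span_singleton_self w
      obtain ⟨lam, hlam⟩ := Submodule.mem_span_singleton.mp hws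
      have hlam0 : lam ≠ 0 := fun hc => hw0 (by rw [← hlam, hc, zero_smul])
      exact ⟨lam, hlam0, hlam ▸ hwW⟩
    obtain ⟨μ, hμ0, hμW⟩ := onesided hW2
      (fun x hx y hy => U'.add_mem hx hy) hU'span (by omega) hAW1
    -- second application : ∃ ν, ν • W ⊆ U'
    have hAW2 : ∀ w ∈ (W : Set V), w ≠ 0 → ∃ lam : L, lam ≠ 0 ∧ lam • w ∈ U' := by
      intro w hw hw0
      have hP : Submodule.span L {w} ∈ linSet K L V W := ⟨w, hw, hw0, rfl⟩
      rw [← hlin] at hP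
      obtain ⟨x, hxU, hx0, heq⟩ := hP
      have hfx : f x ∈ Submodule.span L ({w} : Set V) := by
        rw [heq]
        exact Submodule.mem_span_singleton_self (f x)
      obtain ⟨lam, hlam⟩ := Submodule.mem_span_singleton.mp hfx
      have hlam0 : lam ≠ 0 := fun hc => hfne x hx0 (by rw [← hlam, hc, zero_smul])
      exact ⟨lam, hlam0, hlam ▸ ⟨x, hxU, rfl⟩⟩
    obtain ⟨ν, hν0, hνU'⟩ := onesided hU'2
      (fun x hx y hy => W.add_mem hx hy) hW.1 (by omega) hAW2
    -- the map g
    have hginj : Function.Injective (fun v : V => μ • f v) := fun x y hxy =>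
      hfinj (smul_right_injective V hμ0 hxy)
    have hgsurj : Function.Surjective (fun v : V => μ • f v) := by
      intro v
      obtain ⟨x, hx⟩ := hbij.2 (μ⁻¹ • v)
      exact ⟨x, by simp only [hx, smul_inv_smul₀ hμ0]⟩
    refine ⟨σ, fun v => μ • f v, ⟨hginj, hgsurj⟩, ?_, ?_, ?_⟩
    · intro x y
      show μ • f (x + y) = μ • f x + μ • f y
      rw [hadd, smul_add]
    · intro a x
      show μ • f (a • x) = σ a • (μ • f x)
      rw [hsmul, smul_comm]
    · have hsub : (fun v : V => μ • f v) '' (U : Set V) ⊆ (W : Set V) := by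
        rintro y ⟨x, hxU, rfl⟩
        exact hμW (f x) ⟨x, hxU, rfl⟩
      refine Set.eq_of_subset_of_ncard_le hsub ?_ (Set.toFinite _)
      have hinjν : Function.Injective (fun v : V => ν • v) := smul_right_injective V hν0
      calc (W : Set V).ncard
          = ((fun v : V => ν • v) '' (W : Set V)).ncard :=
            (Set.ncard_image_of_injective _ hinjν).symm
        _ ≤ (U' : Set V).ncard := by
            refine Set.ncard_le_ncard ?_ (Set.toFinite _)
            rintro y ⟨w, hw, rfl⟩
            exact hνU' w hw
        _ = ((U : Set V)).ncard := by
            rw [hU'c]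
            exact Set.ncard_image_of_injective _ hfinj
        _ = ((fun v : V => μ • f v) '' (U : Set V)).ncard :=
            (Set.ncard_image_of_injective _ hginj).symm
  · rintro ⟨τ, g, hbij, hadd, hsmul, hgU⟩
    have hg0 : g 0 = 0 := by
      have hzz := hadd 0 0
      rw [add_zero] at hzz
      exact add_eq_left.mp hzz.symm
    refine ⟨τ, g, hbij, hadd, hsmul, ?_⟩
    ext P
    constructor
    · rintro ⟨u, huU, hu0, rfl⟩
      refine ⟨g u, ?_, ?_, rfl⟩
      · have : g u ∈ g '' (U : Set V) := ⟨u, huU, rfl⟩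
        rw [hgU] at this
        exact this
      · exact fun hc => hu0 (hbij.1 (hc.trans hg0.symm))
    · rintro ⟨w, hwW, hw0, rfl⟩
      have : w ∈ g '' (U : Set V) := by rw [hgU]; exact hwW
      obtain ⟨u, huU, rfl⟩ := this
      exact ⟨u, huU, fun hc => hw0 (by rw [hc, hg0]), rfl⟩
end

section
/- Let n, r, s be positive integers with s dividing r·n and put m = r·n/s, and let q be a real number with q > 1. Then ∑_{j=0}^{s} ∑_{k=0}^{s} ∑_{t=0}^{s} q^{nr − nj} · q^{m·j − m·t + (s−k)(m−n) + (s−k)(s−k−1)/2 + t(t−1)/2} · [s choose k]_q · [k choose j]_q · [j choose t]_q · (−1)^{t+k} = q^{nr} · (−1)^s · (q^{−n}; q)_s. -/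
/-- The q-Pochhammer symbol `(a; q)_k = ∏_{i=0}^{k-1} (1 - a q^i)`. -/
noncomputable def qPoch (q a : ℝ) (k : ℕ) : ℝ :=
  ∏ i ∈ Finset.range k, (1 - a * q ^ i)

/-- The Gaussian binomial coefficient `[a choose b]_q`, which is
`∏_{i=0}^{b-1} (1 - q^{a-i})/(1 - q^{i+1})` for `b ≤ a` and `0` for `b > a`. -/
noncomputable def qBinom (q : ℝ) (a b : ℕ) : ℝ :=
  if b ≤ a then ∏ i ∈ Finset.range b, (1 - q ^ (a - i)) / (1 - q ^ (i + 1)) else 0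

open Finset

noncomputable def qfac (q : ℝ) (n : ℕ) : ℝ := ∏ i ∈ Finset.range n, (1 - q ^ (i + 1))

lemma qfac_succ (q : ℝ) (n : ℕ) : qfac q (n+1) = qfac q n * (1 - q ^ (n+1)) :=
  Finset.prod_range_succ _ _

lemma one_sub_pow_ne {q : ℝ} (hq : 1 < q) {k : ℕ} (hk : 0 < k) : (1 - q ^ k) ≠ 0 := by
  have : 1 < q ^ k := one_lt_pow₀ hq (by omega)
  linarith

lemma qfac_ne_zero {q : ℝ} (hq : 1 < q) (n : ℕ) : qfac q n ≠ 0 := by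
  apply Finset.prod_ne_zero_iff.mpr
  intro i _
  exact one_sub_pow_ne hq (by omega)

lemma qBinom_eq {q : ℝ} (hq : 1 < q) {a b : ℕ} (h : b ≤ a) :
    qBinom q a b = qfac q a / (qfac q b * qfac q (a - b)) := by
  induction b with
  | zero =>
    simp only [qBinom, if_pos h, Finset.range_zero, Finset.prod_empty, Nat.sub_zero]
    rw [show qfac q 0 = 1 by simp [qfac], one_mul, div_self (qfac_ne_zero hq a)]
  | succ b ih =>
    have hb : b ≤ a := by omega
    have hstep : qBinom q a (b+1) = qBinom q a b * ((1 - q ^ (a - b)) / (1 - q ^ (b+1))) := by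
      rw [qBinom, if_pos h, Finset.prod_range_succ, qBinom, if_pos hb]
    rw [hstep, ih hb]
    obtain ⟨c, rfl⟩ : ∃ c, a = b + 1 + c := ⟨a - (b+1), by omega⟩
    rw [show b + 1 + c - b = c + 1 by omega, show b + 1 + c - (b+1) = c by omega,
      qfac_succ q c, qfac_succ q b]
    have e1 := qfac_ne_zero hq (b+1+c)
    have e2 := qfac_ne_zero hq b
    have e3 := qfac_ne_zero hq c
    have e4 : (1 - q ^ (b+1)) ≠ 0 := one_sub_pow_ne hq (by omega)
    have e5 : (1 - q ^ (c+1)) ≠ 0 := one_sub_pow_ne hq (by omega)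
    field_simp

lemma qBinom_zero_of_lt {q : ℝ} {a b : ℕ} (h : a < b) : qBinom q a b = 0 := by
  rw [qBinom, if_neg (by omega)]

lemma qBinom_zero_right (q : ℝ) (a : ℕ) : qBinom q a 0 = 1 := by simp [qBinom]

lemma qBinom_self {q : ℝ} (hq : 1 < q) (a : ℕ) : qBinom q a a = 1 := by
  rw [qBinom_eq hq le_rfl, Nat.sub_self, show qfac q 0 = 1 by simp [qfac], mul_one,
    div_self (qfac_ne_zero hq a)]

lemma qBinom_symm {q : ℝ} (hq : 1 < q) {a b : ℕ} (h : b ≤ a) :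
    qBinom q a (a - b) = qBinom q a b := by
  rw [qBinom_eq hq (by omega : a - b ≤ a), qBinom_eq hq h,
    show a - (a - b) = b by omega, mul_comm]

lemma pascal_one {q : ℝ} (hq : 1 < q) (N t : ℕ) :
    qBinom q (N+1) (t+1) = q ^ (t+1) * qBinom q N (t+1) + qBinom q N t := by
  rcases lt_trichotomy t N with h | rfl | h
  · obtain ⟨u, rfl⟩ : ∃ u, N = t + 1 + u := ⟨N - (t+1), by omega⟩
    rw [qBinom_eq hq (by omega : t+1 ≤ t+1+u+1), qBinom_eq hq (by omega : t+1 ≤ t+1+u),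
      qBinom_eq hq (by omega : t ≤ t+1+u),
      show t+1+u+1 - (t+1) = u+1 by omega, show t+1+u - (t+1) = u by omega,
      show t+1+u - t = u+1 by omega,
      qfac_succ q (t+1+u), qfac_succ q u, qfac_succ q t]
    have e1 := qfac_ne_zero hq (t+1+u)
    have e2 := qfac_ne_zero hq t
    have e3 := qfac_ne_zero hq u
    have e4 : (1 - q ^ (t+1)) ≠ 0 := one_sub_pow_ne hq (by omega)
    have e5 : (1 - q ^ (u+1)) ≠ 0 := one_sub_pow_ne hq (by omega)
    field_simp
    ring_nf
  · rw [qBinom_self hq, qBinom_self hq, qBinom_zero_of_lt (by omega)]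
    ring
  · rw [qBinom_zero_of_lt (by omega), qBinom_zero_of_lt (by omega),
      qBinom_zero_of_lt (by omega)]
    ring

lemma pascal_two {q : ℝ} (hq : 1 < q) (N t : ℕ) (ht : t ≤ N) :
    qBinom q (N+1) (t+1) = qBinom q N (t+1) + q ^ (N-t) * qBinom q N t := by
  rcases lt_or_eq_of_le ht with h | rfl
  · obtain ⟨u, rfl⟩ : ∃ u, N = t + 1 + u := ⟨N - (t+1), by omega⟩
    rw [qBinom_eq hq (by omega : t+1 ≤ t+1+u+1), qBinom_eq hq (by omega : t+1 ≤ t+1+u),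
      qBinom_eq hq (by omega : t ≤ t+1+u),
      show t+1+u+1 - (t+1) = u+1 by omega, show t+1+u - (t+1) = u by omega,
      show t+1+u - t = u+1 by omega,
      qfac_succ q (t+1+u), qfac_succ q u, qfac_succ q t]
    have e1 := qfac_ne_zero hq (t+1+u)
    have e2 := qfac_ne_zero hq t
    have e3 := qfac_ne_zero hq u
    have e4 : (1 - q ^ (t+1)) ≠ 0 := one_sub_pow_ne hq (by omega)
    have e5 : (1 - q ^ (u+1)) ≠ 0 := one_sub_pow_ne hq (by omega)
    field_simp
    ring_nf
  · rw [qBinom_self hq, qBinom_self hq, qBinom_zero_of_lt (by omega), Nat.sub_self]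
    ring

lemma trinomial {q : ℝ} (hq : 1 < q) {s j : ℕ} (h : j ≤ s) (i : ℕ) :
    qBinom q s (j+i) * qBinom q (j+i) j = qBinom q s j * qBinom q (s-j) i := by
  rcases le_or_gt (j+i) s with hle | hlt
  · obtain ⟨w, rfl⟩ : ∃ w, s = j + i + w := ⟨s - (j+i), by omega⟩
    rw [qBinom_eq hq hle, qBinom_eq hq (by omega : j ≤ j+i),
      qBinom_eq hq (by omega : j ≤ j+i+w), qBinom_eq hq (by omega : i ≤ j+i+w-j),
      show j+i+w - (j+i) = w by omega, show j+i - j = i by omega,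
      show j+i+w - j = i+w by omega, show i+w-i = w by omega]
    have e1 := qfac_ne_zero hq (j+i+w)
    have e2 := qfac_ne_zero hq (j+i)
    have e3 := qfac_ne_zero hq j
    have e4 := qfac_ne_zero hq i
    have e5 := qfac_ne_zero hq w
    have e6 := qfac_ne_zero hq (i+w)
    field_simp
  · rw [qBinom_zero_of_lt hlt, qBinom_zero_of_lt (show s - j < i by omega)]
    ring

lemma qPoch_succ (q x : ℝ) (n : ℕ) : qPoch q x (n+1) = qPoch q x n * (1 - x * q ^ n) :=
  Finset.prod_range_succ _ _

lemma qPoch_succ' (q x : ℝ) (n : ℕ) : qPoch q x (n+1) = (1 - x) * qPoch q (x*q) n := by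
  rw [qPoch, Finset.prod_range_succ']
  simp only [pow_zero, mul_one]
  rw [mul_comm]
  congr 1
  refine Finset.prod_congr rfl fun i _ => ?_
  rw [pow_succ']
  ring_nf

lemma sum_pascal_one {q : ℝ} (hq : 1 < q) (N : ℕ) (F : ℕ → ℝ) :
    ∑ t ∈ range (N+2), qBinom q (N+1) t * F t =
      (∑ t ∈ range (N+1), q ^ t * qBinom q N t * F t) +
        ∑ t ∈ range (N+1), qBinom q N t * F (t+1) := by
  rw [Finset.sum_range_succ' (fun t => qBinom q (N+1) t * F t) (N+1)]
  have h1 : ∀ t ∈ range (N+1), qBinom q (N+1) (t+1) * F (t+1) =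
      q ^ (t+1) * qBinom q N (t+1) * F (t+1) + qBinom q N t * F (t+1) := by
    intro t _
    rw [pascal_one hq]
    ring
  rw [Finset.sum_congr rfl h1, Finset.sum_add_distrib]
  have h2 : ∑ t ∈ range (N+1), q ^ (t+1) * qBinom q N (t+1) * F (t+1) + qBinom q (N+1) 0 * F 0
      = ∑ t ∈ range (N+1), q ^ t * qBinom q N t * F t := by
    rw [Finset.sum_range_succ' (fun t => q ^ t * qBinom q N t * F t) N]
    rw [Finset.sum_range_succ (fun t => q ^ (t+1) * qBinom q N (t+1) * F (t+1)) N,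
      qBinom_zero_of_lt (show N < N+1 by omega)]
    simp [qBinom_zero_right]
  rw [add_right_comm, h2]

lemma sum_pascal_two {q : ℝ} (hq : 1 < q) (N : ℕ) (F : ℕ → ℝ) :
    ∑ j ∈ range (N+2), qBinom q (N+1) j * F j =
      (∑ j ∈ range (N+1), qBinom q N j * F j) +
        ∑ j ∈ range (N+1), q ^ (N-j) * qBinom q N j * F (j+1) := by
  rw [Finset.sum_range_succ' (fun j => qBinom q (N+1) j * F j) (N+1)]
  have h1 : ∀ j ∈ range (N+1), qBinom q (N+1) (j+1) * F (j+1) =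
      qBinom q N (j+1) * F (j+1) + q ^ (N-j) * qBinom q N j * F (j+1) := by
    intro j hj
    rw [pascal_two hq N j (by simp at hj; omega)]
    ring
  rw [Finset.sum_congr rfl h1, Finset.sum_add_distrib]
  have h2 : ∑ j ∈ range (N+1), qBinom q N (j+1) * F (j+1) + qBinom q (N+1) 0 * F 0
      = ∑ j ∈ range (N+1), qBinom q N j * F j := by
    rw [Finset.sum_range_succ' (fun j => qBinom q N j * F j) N]
    rw [Finset.sum_range_succ (fun j => qBinom q N (j+1) * F (j+1)) N,
      qBinom_zero_of_lt (show N < N+1 by omega)]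
    simp [qBinom_zero_right]
  rw [add_right_comm, h2]

lemma qbinom_theorem {q : ℝ} (hq : 1 < q) (N : ℕ) : ∀ x : ℝ,
    ∑ t ∈ range (N+1), (-1 : ℝ) ^ t * q ^ (t*(t-1)/2) * x ^ t * qBinom q N t
      = qPoch q x N := by
  induction N with
  | zero => intro x; simp [qBinom_zero_right, qPoch]
  | succ N ih =>
    intro x
    have := sum_pascal_one hq N (fun t => (-1 : ℝ) ^ t * q ^ (t*(t-1)/2) * x ^ t)
    rw [show N+1+1 = N+2 from rfl]
    rw [Finset.sum_congr rfl (fun t _ => by ring :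
      ∀ t ∈ range (N+2), (-1 : ℝ) ^ t * q ^ (t*(t-1)/2) * x ^ t * qBinom q (N+1) t
        = qBinom q (N+1) t * ((-1 : ℝ) ^ t * q ^ (t*(t-1)/2) * x ^ t)), this]
    have e1 : ∑ t ∈ range (N+1), q ^ t * qBinom q N t *
        ((-1 : ℝ) ^ t * q ^ (t*(t-1)/2) * x ^ t) = qPoch q (x*q) N := by
      rw [← ih (x*q)]
      refine Finset.sum_congr rfl fun t _ => ?_
      rw [mul_pow]
      ring
    have e2 : ∑ t ∈ range (N+1), qBinom q N t *
        ((-1 : ℝ) ^ (t+1) * q ^ ((t+1)*((t+1)-1)/2) * x ^ (t+1)) = -x * qPoch q (x*q) N := by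
      rw [← ih (x*q), Finset.mul_sum]
      refine Finset.sum_congr rfl fun t _ => ?_
      rw [Nat.triangle_succ, pow_add, pow_succ, pow_succ, mul_pow]
      ring
    rw [e1, e2, qPoch_succ']
    ring

lemma qvandermonde {q : ℝ} (hq : 1 < q) (a b : ℝ) (s : ℕ) :
    ∑ j ∈ range (s+1), qBinom q s j * a ^ j * qPoch q b j * qPoch q a (s-j)
      = qPoch q (a*b) s := by
  induction s with
  | zero => simp [qBinom_zero_right, qPoch]
  | succ s ih =>
    have := sum_pascal_two hq s (fun j => a ^ j * qPoch q b j * qPoch q a (s+1-j))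
    rw [show s+1+1 = s+2 from rfl]
    rw [Finset.sum_congr rfl (fun j _ => by ring :
      ∀ j ∈ range (s+2), qBinom q (s+1) j * a ^ j * qPoch q b j * qPoch q a (s+1-j)
        = qBinom q (s+1) j * (a ^ j * qPoch q b j * qPoch q a (s+1-j))), this]
    rw [← Finset.sum_add_distrib]
    have key : ∀ j ∈ range (s+1),
        qBinom q s j * (a ^ j * qPoch q b j * qPoch q a (s+1-j)) +
          q ^ (s-j) * qBinom q s j * (a ^ (j+1) * qPoch q b (j+1) * qPoch q a (s+1-(j+1))) =
        (qBinom q s j * a ^ j * qPoch q b j * qPoch q a (s-j)) * (1 - a*b*q^s) := by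
      intro j hj
      simp only [Finset.mem_range] at hj
      obtain ⟨u, rfl⟩ : ∃ u, s = j + u := ⟨s - j, by omega⟩
      rw [show j+u+1-j = u+1 by omega, show j+u+1-(j+1) = u by omega,
        show j+u-j = u by omega, qPoch_succ q a u,
        qPoch_succ q b j, show j+u = u+j by omega, pow_add]
      ring
    rw [Finset.sum_congr rfl key, ← Finset.sum_mul, ih, qPoch_succ]

lemma neg_one_pow_sub {a i : ℕ} (h : i ≤ a) : (-1:ℝ)^(a-i) = (-1)^a * (-1)^i := by
  rw [pow_sub₀ _ (by norm_num) h, ← inv_pow, inv_neg, inv_one]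

lemma sum_reflect (f : ℕ → ℝ) (N : ℕ) :
    ∑ i ∈ Finset.range (N+1), f i = ∑ i ∈ Finset.range (N+1), f (N - i) := by
  rw [← Finset.sum_range_reflect]
  exact Finset.sum_congr rfl fun i hi => by congr 1; try omega

theorem stmt16 (n r s : ℕ) (hn : 0 < n) (hr : 0 < r) (hs : 0 < s) (hdvd : s ∣ r * n)
    (m : ℕ) (hm : m = r * n / s) (q : ℝ) (hq : 1 < q) :
    ∑ j ∈ Finset.range (s + 1), ∑ k ∈ Finset.range (s + 1), ∑ t ∈ Finset.range (s + 1),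
        q ^ ((n : ℤ) * r - (n : ℤ) * j) *
          q ^ ((m : ℤ) * j - (m : ℤ) * t + ((s : ℤ) - k) * ((m : ℤ) - n) +
            (((s - k) * (s - k - 1) / 2 : ℕ) : ℤ) + ((t * (t - 1) / 2 : ℕ) : ℤ)) *
          qBinom q s k * qBinom q k j * qBinom q j t * (-1 : ℝ) ^ (t + k) =
      q ^ (n * r) * (-1 : ℝ) ^ s * qPoch q (q ^ (-(n : ℤ))) s := by
  have hq0 : q ≠ 0 := by intro h; rw [h] at hq; linarith
  have stepJ : ∀ j ∈ Finset.range (s+1),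
      (∑ k ∈ Finset.range (s + 1), ∑ t ∈ Finset.range (s + 1),
        q ^ ((n : ℤ) * r - (n : ℤ) * j) *
          q ^ ((m : ℤ) * j - (m : ℤ) * t + ((s : ℤ) - k) * ((m : ℤ) - n) +
            (((s - k) * (s - k - 1) / 2 : ℕ) : ℤ) + ((t * (t - 1) / 2 : ℕ) : ℤ)) *
          qBinom q s k * qBinom q k j * qBinom q j t * (-1 : ℝ) ^ (t + k))
      = ((-1:ℝ)^s * q ^ ((n:ℤ)*(r:ℤ))) *
          (qBinom q s j * (q ^ ((m:ℤ) - (n:ℤ))) ^ j * qPoch q (q ^ (-(m:ℤ))) j *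
            qPoch q (q ^ ((m:ℤ) - (n:ℤ))) (s - j)) := by
    intro j hj
    simp only [Finset.mem_range] at hj
    have hjs : j ≤ s := by omega
    have hA : ∀ k ∈ Finset.range (s+1),
        (∑ t ∈ Finset.range (s + 1),
          q ^ ((n : ℤ) * r - (n : ℤ) * j) *
            q ^ ((m : ℤ) * j - (m : ℤ) * t + ((s : ℤ) - k) * ((m : ℤ) - n) +
              (((s - k) * (s - k - 1) / 2 : ℕ) : ℤ) + ((t * (t - 1) / 2 : ℕ) : ℤ)) *
            qBinom q s k * qBinom q k j * qBinom q j t * (-1 : ℝ) ^ (t + k))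
        = q ^ ((n : ℤ) * r - (n : ℤ) * j) *
            q ^ ((m : ℤ) * j + ((s : ℤ) - k) * ((m : ℤ) - n) +
              (((s - k) * (s - k - 1) / 2 : ℕ) : ℤ)) *
            qBinom q s k * qBinom q k j * (-1:ℝ)^k * qPoch q (q ^ (-(m:ℤ))) j := by
      intro k hk
      rw [← Finset.sum_subset (Finset.range_subset_range.mpr (show j+1 ≤ s+1 by omega))
        (fun t ht hnt => by
          rw [qBinom_zero_of_lt (show j < t by
            simp only [Finset.mem_range] at ht hnt; omega)]
          ring)]
      have hterm : ∀ t ∈ Finset.range (j+1),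
          q ^ ((n : ℤ) * r - (n : ℤ) * j) *
            q ^ ((m : ℤ) * j - (m : ℤ) * t + ((s : ℤ) - k) * ((m : ℤ) - n) +
              (((s - k) * (s - k - 1) / 2 : ℕ) : ℤ) + ((t * (t - 1) / 2 : ℕ) : ℤ)) *
            qBinom q s k * qBinom q k j * qBinom q j t * (-1 : ℝ) ^ (t + k)
          = (q ^ ((n : ℤ) * r - (n : ℤ) * j) *
              q ^ ((m : ℤ) * j + ((s : ℤ) - k) * ((m : ℤ) - n) +
                (((s - k) * (s - k - 1) / 2 : ℕ) : ℤ)) *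
              qBinom q s k * qBinom q k j * (-1:ℝ)^k) *
            ((-1:ℝ)^t * q ^ (t*(t-1)/2) * (q ^ (-(m:ℤ)))^t * qBinom q j t) := by
        intro t _
        have h2 : q ^ ((m : ℤ) * j - (m : ℤ) * t + ((s : ℤ) - k) * ((m : ℤ) - n) +
              (((s - k) * (s - k - 1) / 2 : ℕ) : ℤ) + ((t * (t - 1) / 2 : ℕ) : ℤ))
            = q ^ ((m : ℤ) * j + ((s : ℤ) - k) * ((m : ℤ) - n) +
                (((s - k) * (s - k - 1) / 2 : ℕ) : ℤ)) *
              (q ^ (-(m:ℤ)))^t * q ^ (t*(t-1)/2) := by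
          rw [show (m : ℤ) * j - (m : ℤ) * t + ((s : ℤ) - k) * ((m : ℤ) - n) +
              (((s - k) * (s - k - 1) / 2 : ℕ) : ℤ) + ((t * (t - 1) / 2 : ℕ) : ℤ)
            = ((m : ℤ) * j + ((s : ℤ) - k) * ((m : ℤ) - n) +
                (((s - k) * (s - k - 1) / 2 : ℕ) : ℤ))
              + (-(m:ℤ)) * t + ((t * (t - 1) / 2 : ℕ) : ℤ) by ring,
            zpow_add₀ hq0, zpow_add₀ hq0, zpow_natCast, zpow_mul, zpow_natCast]
        rw [h2, pow_add]
        ring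
      rw [Finset.sum_congr rfl hterm, ← Finset.mul_sum,
        qbinom_theorem hq j (q ^ (-(m:ℤ)))]
    rw [Finset.sum_congr rfl hA]
    rw [← Finset.sum_subset (show Finset.Ico j (s+1) ⊆ Finset.range (s+1) by
        intro k hk; simp only [Finset.mem_Ico] at hk; simp only [Finset.mem_range]; omega)
      (fun k hk hnk => by
        rw [qBinom_zero_of_lt (show k < j by
          simp only [Finset.mem_range] at hk; simp only [Finset.mem_Ico] at hnk; omega)]
        ring)]
    rw [Finset.sum_Ico_eq_sum_range, show s+1-j = (s-j)+1 by omega]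
    have hrefl : ∀ i ∈ Finset.range ((s-j)+1),
        q ^ ((n : ℤ) * r - (n : ℤ) * j) *
          q ^ ((m : ℤ) * j + ((s : ℤ) - ((j+i : ℕ) : ℤ)) * ((m : ℤ) - n) +
            (((s - (j+i)) * (s - (j+i) - 1) / 2 : ℕ) : ℤ)) *
          qBinom q s (j+i) * qBinom q (j+i) j * (-1:ℝ)^(j+i) * qPoch q (q ^ (-(m:ℤ))) j
        = (fun (i' : ℕ) => q ^ ((n : ℤ) * r - (n : ℤ) * j) *
            q ^ ((m : ℤ) * j + (i' : ℤ) * ((m : ℤ) - n) + ((i' * (i' - 1) / 2 : ℕ) : ℤ)) *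
            (qBinom q s j * qBinom q (s-j) ((s-j) - i')) * (-1:ℝ)^(j + (s-j) - i') *
            qPoch q (q ^ (-(m:ℤ))) j) ((s-j) - i) := by
      intro i hi
      simp only [Finset.mem_range] at hi
      have hiN : i ≤ s - j := by omega
      simp only []
      rw [show (s-j) - ((s-j) - i) = i by omega, show j + (s-j) - ((s-j)-i) = j + i by omega,
        show ((s:ℤ) - ((j+i : ℕ) : ℤ)) = (((s - j - i : ℕ)) : ℤ) by omega,
        show s - (j + i) = s - j - i by omega]
      linear_combination (q ^ ((n : ℤ) * r - (n : ℤ) * j) *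
        q ^ ((m : ℤ) * j + (((s - j - i : ℕ)) : ℤ) * ((m : ℤ) - n) +
          (((s - j - i) * (s - j - i - 1) / 2 : ℕ) : ℤ)) *
        (-1:ℝ)^(j+i) * qPoch q (q ^ (-(m:ℤ))) j) * (trinomial hq hjs i)
    rw [Finset.sum_congr rfl hrefl, ← sum_reflect (fun (i' : ℕ) =>
      q ^ ((n : ℤ) * r - (n : ℤ) * j) *
        q ^ ((m : ℤ) * j + (i' : ℤ) * ((m : ℤ) - n) + ((i' * (i' - 1) / 2 : ℕ) : ℤ)) *
        (qBinom q s j * qBinom q (s-j) ((s-j) - i')) * (-1:ℝ)^(j + (s-j) - i') *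
        qPoch q (q ^ (-(m:ℤ))) j) (s-j)]
    have hterm2 : ∀ i ∈ Finset.range ((s-j)+1),
        q ^ ((n : ℤ) * r - (n : ℤ) * j) *
          q ^ ((m : ℤ) * j + (i : ℤ) * ((m : ℤ) - n) + ((i * (i - 1) / 2 : ℕ) : ℤ)) *
          (qBinom q s j * qBinom q (s-j) ((s-j) - i)) * (-1:ℝ)^(j + (s-j) - i) *
          qPoch q (q ^ (-(m:ℤ))) j
        = (q ^ ((n : ℤ) * r - (n : ℤ) * j) * q ^ ((m:ℤ) * j) * qBinom q s j * (-1:ℝ)^s *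
            qPoch q (q ^ (-(m:ℤ))) j) *
          ((-1:ℝ)^i * q ^ (i*(i-1)/2) * (q ^ ((m:ℤ) - (n:ℤ)))^i * qBinom q (s-j) i) := by
      intro i hi
      simp only [Finset.mem_range] at hi
      have hiN : i ≤ s - j := by omega
      have h2 : q ^ ((m : ℤ) * j + (i : ℤ) * ((m : ℤ) - n) + ((i * (i - 1) / 2 : ℕ) : ℤ))
          = q ^ ((m:ℤ) * j) * (q ^ ((m:ℤ) - (n:ℤ)))^i * q ^ (i*(i-1)/2) := by
        rw [show (m : ℤ) * j + (i : ℤ) * ((m : ℤ) - n) + ((i * (i - 1) / 2 : ℕ) : ℤ)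
            = (m:ℤ) * j + ((m:ℤ) - (n:ℤ)) * i + ((i * (i - 1) / 2 : ℕ) : ℤ) by ring,
          zpow_add₀ hq0, zpow_add₀ hq0, zpow_natCast,
          zpow_mul q ((m:ℤ)-(n:ℤ)) (i:ℤ), zpow_natCast]
      have h3 : (-1:ℝ)^(j + (s-j) - i) = (-1:ℝ)^s * (-1:ℝ)^i := by
        rw [show j + (s-j) = s by omega, neg_one_pow_sub (show i ≤ s by omega)]
      rw [h2, h3, qBinom_symm hq hiN]
      ring
    rw [Finset.sum_congr rfl hterm2, ← Finset.mul_sum,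
      qbinom_theorem hq (s-j) (q ^ ((m:ℤ) - (n:ℤ)))]
    have h4 : q ^ ((n : ℤ) * r - (n : ℤ) * j) * q ^ ((m:ℤ) * j)
        = q ^ ((n:ℤ)*(r:ℤ)) * (q ^ ((m:ℤ) - (n:ℤ)))^j := by
      rw [← zpow_add₀ hq0,
        show (n : ℤ) * r - (n : ℤ) * j + (m:ℤ) * j
          = (n:ℤ)*(r:ℤ) + ((m:ℤ) - (n:ℤ)) * j by ring,
        zpow_add₀ hq0, zpow_mul q ((m:ℤ)-(n:ℤ)) (j:ℤ), zpow_natCast]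
    linear_combination (qBinom q s j * (-1:ℝ)^s * qPoch q (q ^ (-(m:ℤ))) j *
      qPoch q (q ^ ((m:ℤ) - (n:ℤ))) (s-j)) * h4
  rw [Finset.sum_congr rfl stepJ, ← Finset.mul_sum,
    qvandermonde hq (q ^ ((m:ℤ) - (n:ℤ))) (q ^ (-(m:ℤ))) s,
    ← zpow_add₀ hq0, show (m:ℤ) - (n:ℤ) + -(m:ℤ) = -(n:ℤ) by ring,
    show (n:ℤ)*(r:ℤ) = ((n*r : ℕ) : ℤ) by push_cast; ring, zpow_natCast]
  ring
end
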